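/- arXiv:2211.07150 — 4 statements merged into one kernel-verified Lean document; each statement's English description precedes it below -/
import Mathlib

section
/- Let G = (V,E) be a multigraph, let k be a positive integer, and let c : V → Z≥0 be a function satisfying c(v) ≤ min{deg(v), k} for every v ∈ V. If the set S := {v ∈ V : c(v) + μ(v) > k} is a stable set, then there exists an assignment of colors π : E → {1,…,k} such that |π(δ(v))| ≥ c(v) holds for every vertex v ∈ V. -/
open Finset
set_option linter.unusedSectionVars false
set_option linter.unusedVariables false

/-- The set of edges incident to a vertex `v` (the edge star `δ(v)`). -/
def edgeStar {V E : Type*} [Fintype E] [DecidableEq V] (ends : E → Sym2 V) (v : V) :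
    Finset E :=
  Finset.univ.filter (fun e => v ∈ ends e)

/-- The degree of a vertex `v`: the number of edges incident to `v`. -/
def degree {V E : Type*} [Fintype E] [DecidableEq V] (ends : E → Sym2 V) (v : V) : ℕ :=
  (edgeStar ends v).card

/-- `μ(v)`: the maximum number of parallel edges incident to `v`, i.e. the maximum over
vertices `u ≠ v` of the number of edges with endpoints `u` and `v`. -/
def vertexMultiplicity {V E : Type*} [Fintype V] [Fintype E] [DecidableEq V] [DecidableEq E]
    (ends : E → Sym2 V) (v : V) : ℕ :=
  Finset.univ.sup (fun u : V =>
    if u ≠ v then (Finset.univ.filter (fun e => ends e = s(u, v))).card else 0)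



section Dev
variable {V E : Type*} [Fintype V] [Fintype E] [DecidableEq V] [DecidableEq E]

variable (ends : E → Sym2 V) (k : ℕ)

/-- edges of `C` incident to `v` -/
def inc (C : Finset E) (v : V) : Finset E := C.filter (fun e => v ∈ ends e)

/-- number of edges of `C` with endpoints `x,z` -/
def mult (C : Finset E) (x z : V) : ℕ := (C.filter (fun e => ends e = s(x,z))).card

/-- proper partial coloring on `C` -/
def Proper (C : Finset E) (π : E → Fin k) : Prop :=
  ∀ e ∈ C, ∀ f ∈ C, e ≠ f → ∀ v, v ∈ ends e → v ∈ ends f → π e ≠ π f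

def colorsAt (C : Finset E) (π : E → Fin k) (v : V) : Finset (Fin k) :=
  (inc ends C v).image π

def free (C : Finset E) (π : E → Fin k) (v : V) : Finset (Fin k) :=
  Finset.univ \ colorsAt ends k C π v

/-- the other endpoint of `e`, assuming `x ∈ ends e`; junk value `x` otherwise -/
def othD (e : E) (x : V) : V := if h : x ∈ ends e then Sym2.Mem.other' h else x

variable {ends k}

lemma mem_inc {C : Finset E} {v : V} {e : E} : e ∈ inc ends C v ↔ e ∈ C ∧ v ∈ ends e := by
  simp [inc]

lemma inc_mono {C D : Finset E} (h : C ⊆ D) (v : V) : inc ends C v ⊆ inc ends D v :=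
  Finset.filter_subset_filter _ h

lemma mem_colorsAt {C : Finset E} {π : E → Fin k} {v : V} {γ : Fin k} :
    γ ∈ colorsAt ends k C π v ↔ ∃ e ∈ C, v ∈ ends e ∧ π e = γ := by
  simp [colorsAt, mem_inc]; tauto

lemma mem_free {C : Finset E} {π : E → Fin k} {v : V} {γ : Fin k} :
    γ ∈ free ends k C π v ↔ ∀ e ∈ C, v ∈ ends e → π e ≠ γ := by
  simp [free, mem_colorsAt]

lemma card_free_ge {C : Finset E} {π : E → Fin k} {v : V} :
    k - (inc ends C v).card ≤ (free ends k C π v).card := by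
  have h1 : (colorsAt ends k C π v).card ≤ (inc ends C v).card := Finset.card_image_le
  have h2 : (free ends k C π v).card = k - (colorsAt ends k C π v).card := by
    have : (colorsAt ends k C π v) ⊆ Finset.univ := Finset.subset_univ _
    rw [free, Finset.card_sdiff_of_subset this, Finset.card_univ, Fintype.card_fin]
  omega

lemma ends_eq_of_mem {e : E} {x : V} (h : x ∈ ends e) : ends e = s(x, othD ends e x) := by
  rw [othD, dif_pos h]; exact (Sym2.other_spec' h).symm

lemma othD_mem {e : E} {x : V} (h : x ∈ ends e) : othD ends e x ∈ ends e := by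
  rw [othD, dif_pos h]; exact Sym2.other_mem' h

lemma othD_ne (hloopless : ∀ e : E, ¬ (ends e).IsDiag) {e : E} {x : V} (h : x ∈ ends e) :
    othD ends e x ≠ x := by
  intro hEq
  apply hloopless e
  have := ends_eq_of_mem h
  rw [this, hEq]
  exact Sym2.mk_isDiag_iff.2 rfl

/-- properness gives injectivity of `π` on edges at a vertex -/
lemma proper_injOn {C : Finset E} {π : E → Fin k} (hP : Proper ends k C π) (v : V) :
    Set.InjOn π (inc ends C v : Set E) := by
  intro e he f hf hef
  by_contra hne
  simp only [Finset.coe_filter, inc, Set.mem_setOf_eq, Finset.mem_coe, Finset.mem_filter] at he hf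
  exact hP e he.1 f hf.1 hne v he.2 hf.2 hef

lemma card_colorsAt_of_proper {C : Finset E} {π : E → Fin k} (hP : Proper ends k C π) (v : V) :
    (colorsAt ends k C π v).card = (inc ends C v).card :=
  Finset.card_image_of_injOn (proper_injOn hP v)

end Dev

section Swap
variable {V E : Type*} [Fintype V] [Fintype E] [DecidableEq V] [DecidableEq E]
variable {ends : E → Sym2 V} {k : ℕ}

lemma sym2_eq {z : Sym2 V} {u w : V} (hu : u ∈ z) (hw : w ∈ z) (hne : u ≠ w) :
    z = s(u,w) := by
  induction z using Sym2.ind with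
  | _ a b =>
    rw [Sym2.mem_iff] at hu hw
    rcases hu with rfl | rfl <;> rcases hw with rfl | rfl
    · exact absurd rfl hne
    · rfl
    · exact Sym2.eq_swap
    · exact absurd rfl hne

variable (ends k) in
/-- the `αβ`-adjacency relation -/
def abRel (C : Finset E) (π : E → Fin k) (α β : Fin k) (u w : V) : Prop :=
  ∃ e ∈ C, ends e = s(u,w) ∧ (π e = α ∨ π e = β)

variable (ends k) in
def conn (C : Finset E) (π : E → Fin k) (α β : Fin k) (u w : V) : Prop :=
  Relation.ReflTransGen (abRel ends k C π α β) u w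

lemma abRel_symm {C : Finset E} {π : E → Fin k} {α β : Fin k} {u w : V}
    (h : abRel ends k C π α β u w) : abRel ends k C π α β w u := by
  obtain ⟨e, he, hE, hc⟩ := h
  exact ⟨e, he, by rwa [Sym2.eq_swap], hc⟩

lemma conn_symm {C : Finset E} {π : E → Fin k} {α β : Fin k} {u w : V}
    (h : conn ends k C π α β u w) : conn ends k C π α β w u := by
  induction h with
  | refl => exact Relation.ReflTransGen.refl
  | tail _ h2 ih => exact Relation.ReflTransGen.head (abRel_symm h2) ih

lemma conn_trans {C : Finset E} {π : E → Fin k} {α β : Fin k} {u w z : V}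
    (h : conn ends k C π α β u w) (h' : conn ends k C π α β w z) :
    conn ends k C π α β u z := Relation.ReflTransGen.trans h h'

/-- closure: if an αβ-edge has one endpoint connected to `v₀`, so is the other -/
lemma conn_closure {C : Finset E} {π : E → Fin k} {α β v₀} {e : E}
    (he : e ∈ C) (hc : π e = α ∨ π e = β) {u w : V} (hu : u ∈ ends e) (hw : w ∈ ends e)
    (hcu : conn ends k C π α β v₀ u) : conn ends k C π α β v₀ w := by
  by_cases hne : u = w
  · exact hne ▸ hcu
  · exact Relation.ReflTransGen.tail hcu ⟨e, he, sym2_eq hu hw hne, hc⟩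

variable (ends k) in
open Classical in
/-- the Kempe swap of colors `α,β` on the component of `v₀` -/
noncomputable def swap (C : Finset E) (π : E → Fin k) (α β : Fin k) (v₀ : V) : E → Fin k :=
  fun e => if e ∈ C ∧ (π e = α ∨ π e = β) ∧ ∃ u ∈ ends e, conn ends k C π α β v₀ u then
    (if π e = α then β else α) else π e

lemma swap_eq_of_not_touched {C : Finset E} {π : E → Fin k} {α β : Fin k} {v₀ : V} {e : E}
    (h : ¬ (e ∈ C ∧ (π e = α ∨ π e = β) ∧ ∃ u ∈ ends e, conn ends k C π α β v₀ u)) :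
    swap ends k C π α β v₀ e = π e := by
  rw [swap, if_neg h]

lemma swap_mem_pair {C : Finset E} {π : E → Fin k} {α β : Fin k} {v₀ : V} {e : E} :
    swap ends k C π α β v₀ e = π e ∨
      ((π e = α ∨ π e = β) ∧ (swap ends k C π α β v₀ e = α ∨ swap ends k C π α β v₀ e = β)) := by
  rw [swap]
  split
  · rename_i h
    right
    refine ⟨h.2.1, ?_⟩
    split <;> simp
  · left; rfl

/-- at a vertex not connected to `v₀`, no incident edge is touched -/
lemma swap_eq_at_vertex {C : Finset E} {π : E → Fin k} {α β : Fin k} {v₀ v : V}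
    (hv : ¬ conn ends k C π α β v₀ v) {e : E} (he : v ∈ ends e) :
    swap ends k C π α β v₀ e = π e := by
  apply swap_eq_of_not_touched
  rintro ⟨heC, hcol, u, hu, hconn⟩
  exact hv (conn_closure heC hcol hu he hconn)

lemma swap_proper {C : Finset E} {π : E → Fin k} {α β : Fin k} {v₀ : V}
    (hab : α ≠ β) (hP : Proper ends k C π) :
    Proper ends k C (swap ends k C π α β v₀) := by
  intro e he f hf hef v hve hvf
  have base := hP e he f hf hef v hve hvf
  by_cases hte : e ∈ C ∧ (π e = α ∨ π e = β) ∧ ∃ u ∈ ends e, conn ends k C π α β v₀ u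
  · by_cases htf : f ∈ C ∧ (π f = α ∨ π f = β) ∧ ∃ u ∈ ends f, conn ends k C π α β v₀ u
    · rw [swap, if_pos hte, swap, if_pos htf]
      rcases hte.2.1 with h1 | h1 <;> rcases htf.2.1 with h2 | h2
      · exact absurd (h1.trans h2.symm) base
      · rw [if_pos h1, if_neg (fun hh => hab (hh.symm.trans h2))]
        exact Ne.symm hab
      · rw [if_neg (fun hh => hab (hh.symm.trans h1)), if_pos h2]
        exact hab
      · exact absurd (h1.trans h2.symm) base
    · have hfc : ¬ (π f = α ∨ π f = β) := by
        intro hc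
        apply htf
        obtain ⟨u, hu, hconn⟩ := hte.2.2
        have : conn ends k C π α β v₀ v := conn_closure he hte.2.1 hu hve hconn
        exact ⟨hf, hc, v, hvf, this⟩
      rw [swap, if_pos hte, swap_eq_of_not_touched (by tauto)]
      rcases hte.2.1 with h1 | h1
      · rw [if_pos h1]; exact fun hh => hfc (Or.inr hh.symm)
      · rw [if_neg (fun hh => hab (hh.symm.trans h1))]
        exact fun hh => hfc (Or.inl hh.symm)
  · by_cases htf : f ∈ C ∧ (π f = α ∨ π f = β) ∧ ∃ u ∈ ends f, conn ends k C π α β v₀ u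
    · have hec : ¬ (π e = α ∨ π e = β) := by
        intro hc
        apply hte
        obtain ⟨u, hu, hconn⟩ := htf.2.2
        have : conn ends k C π α β v₀ v := conn_closure hf htf.2.1 hu hvf hconn
        exact ⟨he, hc, v, hve, this⟩
      rw [swap_eq_of_not_touched (by tauto), swap, if_pos htf]
      rcases htf.2.1 with h1 | h1
      · rw [if_pos h1]; exact fun hh => hec (Or.inr hh)
      · rw [if_neg (fun hh => hab (hh.symm.trans h1))]
        exact fun hh => hec (Or.inl hh)
    · rw [swap_eq_of_not_touched (by tauto), swap_eq_of_not_touched (by tauto)]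
      exact base

/-- at an untouched vertex the free sets agree -/
lemma swap_free_eq {C : Finset E} {π : E → Fin k} {α β : Fin k} {v₀ v : V}
    (hv : ¬ conn ends k C π α β v₀ v) :
    free ends k C (swap ends k C π α β v₀) v = free ends k C π v := by
  unfold free colorsAt
  congr 1
  apply Finset.image_congr
  intro e he
  rw [Finset.mem_coe, mem_inc] at he
  exact swap_eq_at_vertex hv he.2

/-- at a connected vertex: `β` is free after the swap iff `α` was free before -/
lemma swap_free_beta {C : Finset E} {π : E → Fin k} {α β : Fin k} {v₀ v : V}
    (hab : α ≠ β) (hv : conn ends k C π α β v₀ v) :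
    (β ∈ free ends k C (swap ends k C π α β v₀) v ↔ α ∈ free ends k C π v) := by
  rw [mem_free, mem_free]
  constructor
  · intro h e heC hve hcon
    have ht : e ∈ C ∧ (π e = α ∨ π e = β) ∧ ∃ u ∈ ends e, conn ends k C π α β v₀ u :=
      ⟨heC, Or.inl hcon, v, hve, hv⟩
    have : swap ends k C π α β v₀ e = β := by rw [swap, if_pos ht, if_pos hcon]
    exact h e heC hve this
  · intro h e heC hve hcon
    by_cases ht : e ∈ C ∧ (π e = α ∨ π e = β) ∧ ∃ u ∈ ends e, conn ends k C π α β v₀ u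
    · rw [swap, if_pos ht] at hcon
      rcases ht.2.1 with h1 | h1
      · exact h e heC hve h1
      · rw [if_neg (fun hh => hab (hh.symm.trans h1))] at hcon
        exact absurd hcon hab
    · rw [swap_eq_of_not_touched ht] at hcon
      exact ht ⟨heC, Or.inr hcon, v, hve, hv⟩

/-- colors other than `α,β` are unaffected everywhere -/
lemma swap_free_other {C : Finset E} {π : E → Fin k} {α β : Fin k} {v₀ v : V} {γ : Fin k}
    (hγα : γ ≠ α) (hγβ : γ ≠ β) :
    (γ ∈ free ends k C (swap ends k C π α β v₀) v ↔ γ ∈ free ends k C π v) := by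
  rw [mem_free, mem_free]
  constructor
  · intro h e heC hve hcon
    refine h e heC hve ?_
    rcases @swap_mem_pair V E _ _ _ _ ends k C π α β v₀ e with h1 | ⟨h2, h3⟩
    · rw [h1, hcon]
    · rcases h2 with h2 | h2
      · exact absurd (h2.symm.trans hcon) (Ne.symm hγα)
      · exact absurd (h2.symm.trans hcon) (Ne.symm hγβ)
  · intro h e heC hve hcon
    rcases @swap_mem_pair V E _ _ _ _ ends k C π α β v₀ e with h1 | ⟨h2, h3⟩
    · exact h e heC hve (h1 ▸ hcon)
    · rcases h3 with h3 | h3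
      · exact absurd (h3.symm.trans hcon) (Ne.symm hγα)
      · exact absurd (h3.symm.trans hcon) (Ne.symm hγβ)

end Swap

section Count
variable {V E : Type*} [Fintype V] [Fintype E] [DecidableEq V] [DecidableEq E]
variable {ends : E → Sym2 V} {k : ℕ}

lemma sym2_exists_rep (z : Sym2 V) : ∃ a b, z = s(a,b) :=
  Sym2.ind (fun a b => ⟨a, b, rfl⟩) z

/-- counting steps for reachability -/
def reachN (R : V → V → Prop) : ℕ → V → V → Prop
  | 0, u, w => w = u
  | (n+1), u, w => ∃ z, reachN R n u z ∧ R z w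

lemma reflTransGen_iff_reachN {R : V → V → Prop} {u w : V} :
    Relation.ReflTransGen R u w ↔ ∃ n, reachN R n u w := by
  constructor
  · intro h
    induction h with
    | refl => exact ⟨0, rfl⟩
    | tail _ hstep ih => obtain ⟨n, hn⟩ := ih; exact ⟨n+1, _, hn, hstep⟩
  · rintro ⟨n, hn⟩
    induction n generalizing w with
    | zero => rw [reachN] at hn; subst hn; rfl
    | succ m ih =>
      obtain ⟨z, hz, hR⟩ := hn
      exact Relation.ReflTransGen.tail (ih hz) hR

lemma abdeg_le_two {C : Finset E} {π : E → Fin k} (hP : Proper ends k C π) (α β : Fin k)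
    (v : V) : (inc ends (C.filter (fun e => π e = α ∨ π e = β)) v).card ≤ 2 := by
  set D := C.filter (fun e => π e = α ∨ π e = β) with hD
  have hsub : inc ends D v ⊆ inc ends C v := inc_mono (Finset.filter_subset _ _) v
  have hinj : Set.InjOn π (inc ends D v : Set E) :=
    (proper_injOn hP v).mono (by exact_mod_cast hsub)
  have h1 : (inc ends D v).card = ((inc ends D v).image π).card :=
    (Finset.card_image_of_injOn hinj).symm
  have h2 : (inc ends D v).image π ⊆ {α, β} := by
    intro γ hγ
    obtain ⟨e, he, rfl⟩ := Finset.mem_image.1 hγ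
    rw [mem_inc, hD, Finset.mem_filter] at he
    simpa using he.1.2
  calc (inc ends D v).card = ((inc ends D v).image π).card := h1
    _ ≤ ({α, β} : Finset (Fin k)).card := Finset.card_le_card h2
    _ ≤ 2 := Finset.card_insert_le _ _ |>.trans (by simp)

open Classical in
lemma no_three_ends (hloopless : ∀ e : E, ¬ (ends e).IsDiag)
    {C : Finset E} {π : E → Fin k} (hP : Proper ends k C π) {α β : Fin k}
    {x₁ x₂ x₃ : V} (h12 : x₁ ≠ x₂) (h13 : x₁ ≠ x₃) (h23 : x₂ ≠ x₃)
    (hc2 : conn ends k C π α β x₁ x₂) (hc3 : conn ends k C π α β x₁ x₃)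
    (hd1 : (inc ends (C.filter (fun e => π e = α ∨ π e = β)) x₁).card ≤ 1)
    (hd2 : (inc ends (C.filter (fun e => π e = α ∨ π e = β)) x₂).card ≤ 1)
    (hd3 : (inc ends (C.filter (fun e => π e = α ∨ π e = β)) x₃).card ≤ 1) :
    False := by
  set D := C.filter (fun e => π e = α ∨ π e = β) with hD
  set K : Finset V := Finset.univ.filter (fun v => conn ends k C π α β x₁ v) with hK
  set DK : Finset E := D.filter (fun e => ∀ u ∈ ends e, conn ends k C π α β x₁ u) with hDK
  have hmemK : ∀ v, v ∈ K ↔ conn ends k C π α β x₁ v := by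
    intro v; rw [hK, Finset.mem_filter]; simp
  have hDmem : ∀ e, e ∈ D ↔ e ∈ C ∧ (π e = α ∨ π e = β) := by
    intro e; rw [hD, Finset.mem_filter]
  -- Step A : sum of degrees over K equals twice the number of edges inside K
  have stepA : ∑ v ∈ K, (inc ends D v).card = 2 * DK.card := by
    have h1 : ∀ v, (inc ends D v).card = ∑ e ∈ D, if v ∈ ends e then 1 else 0 := by
      intro v; rw [inc, Finset.card_filter]
    calc ∑ v ∈ K, (inc ends D v).card
        = ∑ v ∈ K, ∑ e ∈ D, if v ∈ ends e then 1 else 0 := by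
          exact Finset.sum_congr rfl (fun v _ => h1 v)
      _ = ∑ e ∈ D, ∑ v ∈ K, if v ∈ ends e then 1 else 0 := Finset.sum_comm
      _ = ∑ e ∈ D, (K.filter (fun v => v ∈ ends e)).card := by
          exact Finset.sum_congr rfl (fun e _ => (Finset.card_filter _ _).symm)
      _ = ∑ e ∈ DK, (K.filter (fun v => v ∈ ends e)).card := by
          apply (Finset.sum_filter_add_sum_filter_not D
            (fun e => ∀ u ∈ ends e, conn ends k C π α β x₁ u) _).symm.trans
          have : ∑ e ∈ D.filter (fun e => ¬ ∀ u ∈ ends e, conn ends k C π α β x₁ u),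
              (K.filter (fun v => v ∈ ends e)).card = 0 := by
            apply Finset.sum_eq_zero
            intro e he
            rw [Finset.mem_filter] at he
            rw [Finset.card_eq_zero, Finset.filter_eq_empty_iff]
            intro v hv
            intro hve
            apply he.2
            intro u hu
            exact conn_closure ((hDmem e).1 he.1).1 ((hDmem e).1 he.1).2 hve hu ((hmemK v).1 hv)
          rw [this, add_zero]
      _ = ∑ e ∈ DK, 2 := by
          apply Finset.sum_congr rfl
          intro e he
          rw [hDK, Finset.mem_filter] at he
          obtain ⟨a, b, hab⟩ := sym2_exists_rep (ends e)
          have hane : a ≠ b := by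
            intro hEq; apply hloopless e; rw [hab, hEq]; exact Sym2.mk_isDiag_iff.2 rfl
          have ha : a ∈ ends e := by rw [hab]; exact Sym2.mem_mk_left _ _
          have hb : b ∈ ends e := by rw [hab]; exact Sym2.mem_mk_right _ _
          have : K.filter (fun v => v ∈ ends e) = {a, b} := by
            ext v
            rw [Finset.mem_filter, hmemK]
            constructor
            · rintro ⟨_, hv⟩
              rw [hab, Sym2.mem_iff] at hv
              simpa using hv
            · intro hv
              simp only [Finset.mem_insert, Finset.mem_singleton] at hv
              rcases hv with rfl | rfl
              · exact ⟨he.2 _ ha, ha⟩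
              · exact ⟨he.2 _ hb, hb⟩
          rw [this, Finset.card_insert_of_notMem (by simpa using hane), Finset.card_singleton]
      _ = 2 * DK.card := by rw [Finset.sum_const, smul_eq_mul, mul_comm]
  -- Step B : |K| ≤ |DK| + 1
  have stepB : K.card ≤ DK.card + 1 := by
    set R := abRel ends k C π α β with hR
    set dist : V → ℕ := fun w => if h : ∃ n, reachN R n x₁ w then Nat.find h else 0 with hdist
    have hreach : ∀ w ∈ K, ∃ n, reachN R n x₁ w := by
      intro w hw; exact reflTransGen_iff_reachN.1 ((hmemK w).1 hw)
    have hspec : ∀ w ∈ K, reachN R (dist w) x₁ w := by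
      intro w hw
      show reachN R (if h : ∃ n, reachN R n x₁ w then Nat.find h else 0) x₁ w
      rw [dif_pos (hreach w hw)]
      exact Nat.find_spec (hreach w hw)
    have hpar : ∀ w, w ∈ K.erase x₁ → ∃ e, e ∈ DK ∧ ∃ z, ends e = s(z,w) ∧ dist z < dist w := by
      intro w hw
      rw [Finset.mem_erase] at hw
      have hwK := hw.2
      have hd1' : dist w ≠ 0 := by
        intro h0
        have := hspec w hwK
        rw [h0] at this
        rw [reachN] at this
        exact hw.1 this
      obtain ⟨m, hm⟩ : ∃ m, dist w = m + 1 := ⟨dist w - 1, by omega⟩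
      have := hspec w hwK
      rw [hm] at this
      obtain ⟨z, hz, hRzw⟩ := this
      obtain ⟨e, heC, hends, hcol⟩ := hRzw
      have hzK : z ∈ K := (hmemK z).2 (reflTransGen_iff_reachN.2 ⟨m, hz⟩)
      have hdz : dist z ≤ m := by
        show (if h : ∃ n, reachN R n x₁ z then Nat.find h else 0) ≤ m
        rw [dif_pos ⟨m, hz⟩]
        exact Nat.find_le hz
      refine ⟨e, ?_, z, hends, by omega⟩
      rw [hDK, Finset.mem_filter, hDmem]
      refine ⟨⟨heC, hcol⟩, ?_⟩
      intro u hu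
      rw [hends, Sym2.mem_iff] at hu
      rcases hu with rfl | rfl
      · exact (hmemK u).1 hzK
      · exact (hmemK u).1 hwK
    rcases Finset.eq_empty_or_nonempty (K.erase x₁) with hemp | hne
    · have : K.card ≤ 1 := by
        by_contra hgt
        push_neg at hgt
        obtain ⟨a, ha, b, hb, hab⟩ := Finset.one_lt_card.1 hgt
        have : a ∈ K.erase x₁ ∨ b ∈ K.erase x₁ := by
          by_cases hax : a = x₁
          · right; exact Finset.mem_erase.2 ⟨by rw [← hax]; exact Ne.symm hab, hb⟩
          · left; exact Finset.mem_erase.2 ⟨hax, ha⟩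
        rcases this with h | h <;> rw [hemp] at h <;> exact absurd h (Finset.notMem_empty _)
      omega
    · have hEne : Nonempty E := ⟨(hpar _ hne.choose_spec).choose⟩
      set g : V → E := fun w =>
        if hw : w ∈ K.erase x₁ then (hpar w hw).choose else Classical.arbitrary E with hg
      have hgmem : ∀ w ∈ K.erase x₁, g w ∈ DK := by
        intro w hw; rw [hg]; simp only [dif_pos hw]; exact (hpar w hw).choose_spec.1
      have hgend : ∀ w (hw : w ∈ K.erase x₁), ∃ z, ends (g w) = s(z,w) ∧ dist z < dist w := by
        intro w hw; rw [hg]; simp only [dif_pos hw]; exact (hpar w hw).choose_spec.2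
      have hinj : Set.InjOn g (K.erase x₁ : Set V) := by
        intro w hw w' hw' hEq
        rw [Finset.mem_coe] at hw hw'
        obtain ⟨z, hz, hdz⟩ := hgend w hw
        obtain ⟨z', hz', hdz'⟩ := hgend w' hw'
        by_contra hne'
        rw [hEq, hz'] at hz
        rw [Sym2.eq_iff] at hz
        rcases hz with ⟨rfl, rfl⟩ | ⟨h1, h2⟩
        · exact hne' rfl
        · subst h1; subst h2; omega
      have : (K.erase x₁).card ≤ DK.card := Finset.card_le_card_of_injOn g hgmem hinj
      have hx1K : x₁ ∈ K := (hmemK x₁).2 Relation.ReflTransGen.refl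
      have := Finset.card_erase_of_mem hx1K
      omega
  -- Step C : at most 2 vertices of K have degree ≤ 1
  set Kf := K.filter (fun v => (inc ends D v).card ≤ 1) with hKf
  have hsub3 : ({x₁, x₂, x₃} : Finset V) ⊆ Kf := by
    intro v hv
    simp only [Finset.mem_insert, Finset.mem_singleton] at hv
    rw [hKf, Finset.mem_filter, hmemK]
    rcases hv with rfl | rfl | rfl
    · exact ⟨Relation.ReflTransGen.refl, hd1⟩
    · exact ⟨hc2, hd2⟩
    · exact ⟨hc3, hd3⟩
  have hcard3 : 3 ≤ Kf.card := by
    have : ({x₁, x₂, x₃} : Finset V).card = 3 := by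
      rw [Finset.card_insert_of_notMem (by simp [h12, h13]),
        Finset.card_insert_of_notMem (by simp [h23]), Finset.card_singleton]
    rw [← this]
    exact Finset.card_le_card hsub3
  have hsum_le : ∑ v ∈ K, (inc ends D v).card ≤ 2 * K.card - Kf.card := by
    have hsplit := Finset.sum_filter_add_sum_filter_not K
      (fun v => (inc ends D v).card ≤ 1) (fun v => (inc ends D v).card)
    have h1 : ∑ v ∈ Kf, (inc ends D v).card ≤ Kf.card := by
      calc ∑ v ∈ Kf, (inc ends D v).card ≤ ∑ _v ∈ Kf, 1 := by
            apply Finset.sum_le_sum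
            intro v hv
            rw [hKf, Finset.mem_filter] at hv
            exact hv.2
        _ = Kf.card := by rw [Finset.sum_const, smul_eq_mul, mul_one]
    have h2 : ∑ v ∈ K.filter (fun v => ¬ (inc ends D v).card ≤ 1), (inc ends D v).card
        ≤ 2 * (K.card - Kf.card) := by
      have hc : (K.filter (fun v => ¬ (inc ends D v).card ≤ 1)).card = K.card - Kf.card := by
        rw [hKf, Finset.filter_not, Finset.card_sdiff_of_subset (Finset.filter_subset _ _)]
      calc ∑ v ∈ K.filter (fun v => ¬ (inc ends D v).card ≤ 1), (inc ends D v).card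
          ≤ ∑ _v ∈ K.filter (fun v => ¬ (inc ends D v).card ≤ 1), 2 := by
            apply Finset.sum_le_sum
            intro v _
            exact abdeg_le_two hP α β v
        _ = 2 * (K.card - Kf.card) := by rw [Finset.sum_const, smul_eq_mul, mul_comm, hc]
    have hKfle : Kf.card ≤ K.card := Finset.card_le_card (Finset.filter_subset _ _)
    rw [← hKf] at hsplit
    omega
  have hKfle : Kf.card ≤ K.card := Finset.card_le_card (Finset.filter_subset _ _)
  rw [stepA] at hsum_le
  omega

end Count

section Fan
variable {V E : Type*} [Fintype V] [Fintype E] [DecidableEq V] [DecidableEq E]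
variable {ends : E → Sym2 V} {k : ℕ}

variable (ends k) in
structure FanData (C : Finset E) (π : E → Fin k) (e₀ : E) (x : V) : Type _ where
  p : ℕ
  f : ℕ → E
  hp : 1 ≤ p
  h1 : f 1 = e₀
  hmem : ∀ i, 2 ≤ i → i ≤ p → f i ∈ C
  hx : ∀ i, 1 ≤ i → i ≤ p → x ∈ ends (f i)
  hinj : ∀ i j, 1 ≤ i → i ≤ p → 1 ≤ j → j ≤ p → f i = f j → i = j
  hfree : ∀ i, 2 ≤ i → i ≤ p → π (f i) ∈ free ends k C π (othD ends (f (i-1)) x)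
  hcol : ∀ i j, 2 ≤ i → i ≤ p → 2 ≤ j → j ≤ p → i ≠ j → π (f i) ≠ π (f j)

/-- the number of fan colors is `p - 1`, hence `p ≤ k + 1` -/
lemma FanData.p_le {C : Finset E} {π : E → Fin k} {e₀ : E} {x : V}
    (F : FanData ends k C π e₀ x) : F.p ≤ k + 1 := by
  by_contra h
  push_neg at h
  have hinj : Set.InjOn (fun i => π (F.f i)) ((Finset.Icc 2 F.p : Finset ℕ) : Set ℕ) := by
    intro i hi j hj hij
    simp only [Finset.coe_Icc, Set.mem_Icc] at hi hj
    by_contra hne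
    exact F.hcol i j hi.1 hi.2 hj.1 hj.2 hne hij
  have := Finset.card_le_card_of_injOn (fun i => π (F.f i))
    (fun i _ => Finset.mem_univ _) hinj
  rw [Nat.card_Icc] at this
  simp only [Finset.card_univ, Fintype.card_fin] at this
  omega

/-- Rotate the fan up to position `i₀` and color the freed edge with `γ`. -/
lemma rotate_color (hloopless : ∀ e : E, ¬ (ends e).IsDiag)
    {C : Finset E} {π : E → Fin k} (hP : Proper ends k C π)
    {e₀ : E} (he₀ : e₀ ∉ C) {x : V} (F : FanData ends k C π e₀ x)
    {i₀ : ℕ} (hi1 : 1 ≤ i₀) (hi2 : i₀ ≤ F.p) {γ : Fin k}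
    (hγx : γ ∈ free ends k C π x)
    (hγz : γ ∈ free ends k C π (othD ends (F.f i₀) x)) :
    ∃ π', Proper ends k (insert e₀ C) π' := by
  classical
  obtain ⟨p, f, hp, h1, hmem, hx, hinj, hfree, hcol⟩ := F
  simp only at hi2 hγz ⊢
  refine ⟨fun g => if h : ∃ j, 1 ≤ j ∧ j < i₀ ∧ g = f j then π (f (h.choose + 1))
    else if g = f i₀ then γ else π g, ?_⟩
  set π' : E → Fin k := fun g => if h : ∃ j, 1 ≤ j ∧ j < i₀ ∧ g = f j then π (f (h.choose + 1))
    else if g = f i₀ then γ else π g with hπ'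
  have hmem' : ∀ i, 1 ≤ i → i ≤ p → f i ∈ insert e₀ C := by
    intro i hi1' hi2'
    rcases Nat.lt_or_ge i 2 with h | h
    · have : i = 1 := by omega
      rw [this, h1]; exact Finset.mem_insert_self _ _
    · exact Finset.mem_insert_of_mem (hmem i h hi2')
  have hval_mid : ∀ j, 1 ≤ j → j < i₀ → π' (f j) = π (f (j+1)) := by
    intro j hj1 hj2
    have hex : ∃ j', 1 ≤ j' ∧ j' < i₀ ∧ f j = f j' := ⟨j, hj1, hj2, rfl⟩
    rw [hπ']
    simp only
    rw [dif_pos hex]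
    congr 2
    have hs := hex.choose_spec
    have : hex.choose = j := hinj _ _ hs.1 (by omega) hj1 (by omega) hs.2.2.symm
    omega
  have hval_top : π' (f i₀) = γ := by
    have hnex : ¬ ∃ j, 1 ≤ j ∧ j < i₀ ∧ f i₀ = f j := by
      rintro ⟨j, hj1, hj2, hEq⟩
      have := hinj i₀ j hi1 hi2 hj1 (by omega) hEq
      omega
    rw [hπ']
    simp only
    rw [dif_neg hnex]
    simp
  have hval_out : ∀ g, (∀ j, 1 ≤ j → j ≤ i₀ → g ≠ f j) → π' g = π g := by
    intro g hg
    have hnex : ¬ ∃ j, 1 ≤ j ∧ j < i₀ ∧ g = f j := by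
      rintro ⟨j, hj1, hj2, hEq⟩
      exact hg j hj1 (by omega) hEq
    rw [hπ']
    simp only
    rw [dif_neg hnex, if_neg (hg i₀ hi1 le_rfl)]
  have hvertex : ∀ i, 1 ≤ i → i ≤ p → ∀ v, v ∈ ends (f i) → v = x ∨ v = othD ends (f i) x := by
    intro i hi1' hi2' v hv
    rw [ends_eq_of_mem (hx i hi1' hi2'), Sym2.mem_iff] at hv
    exact hv
  have hout : ∀ b, b ∈ insert e₀ C → (¬ ∃ i, 1 ≤ i ∧ i ≤ i₀ ∧ b = f i) →
      b ∈ C ∧ π' b = π b := by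
    intro b hb hbP
    have hbC : b ∈ C := by
      rcases Finset.mem_insert.1 hb with rfl | h
      · exact absurd ⟨1, le_rfl, hi1, h1.symm⟩ hbP
      · exact h
    refine ⟨hbC, hval_out b ?_⟩
    intro j hj1 hj2 hEq
    exact hbP ⟨j, hj1, hj2, hEq⟩
  -- one fan-prefix edge against one non-fan edge
  have oneside : ∀ i, 1 ≤ i → i ≤ i₀ → ∀ b, b ∈ C → π' b = π b →
      (∀ j, 1 ≤ j → j ≤ i₀ → b ≠ f j) →
      ∀ v, v ∈ ends (f i) → v ∈ ends b → π' (f i) ≠ π' b := by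
    intro i hI1 hI2 b hbC hbv hbP v hvf hvb
    rw [hbv]
    rcases Nat.lt_or_ge i i₀ with hlt | hge
    · rw [hval_mid i hI1 hlt]
      have hfi1C : f (i+1) ∈ C := hmem (i+1) (by omega) (by omega)
      have hfi1free : π (f (i+1)) ∈ free ends k C π (othD ends (f i) x) := by
        have := hfree (i+1) (by omega) (by omega)
        simpa using this
      rcases hvertex i hI1 (by omega) v hvf with rfl | rfl
      · have hbne : f (i+1) ≠ b := fun hEq => hbP (i+1) (by omega) (by omega) hEq.symm
        exact hP (f (i+1)) hfi1C b hbC hbne v (hx (i+1) (by omega) (by omega)) hvb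
      · have := mem_free.1 hfi1free b hbC hvb
        exact fun hh => this hh.symm
    · have : i = i₀ := by omega
      subst this
      rw [hval_top]
      rcases hvertex i hI1 (by omega) v hvf with rfl | rfl
      · exact fun hh => (mem_free.1 hγx b hbC hvb) hh.symm
      · exact fun hh => (mem_free.1 hγz b hbC hvb) hh.symm
  -- two fan-prefix edges
  have fanpair : ∀ i j, 1 ≤ i → i ≤ i₀ → 1 ≤ j → j ≤ i₀ → i ≠ j →
      π' (f i) ≠ π' (f j) := by
    intro i j hI1 hI2 hJ1 hJ2 hij
    rcases Nat.lt_or_ge i i₀ with hlti | hgei <;> rcases Nat.lt_or_ge j i₀ with hltj | hgej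
    · rw [hval_mid i hI1 hlti, hval_mid j hJ1 hltj]
      exact hcol (i+1) (j+1) (by omega) (by omega) (by omega) (by omega) (by omega)
    · have hj : j = i₀ := by omega
      subst hj
      rw [hval_mid i hI1 hlti, hval_top]
      have hfi1C : f (i+1) ∈ C := hmem (i+1) (by omega) (by omega)
      exact fun hh => (mem_free.1 hγx (f (i+1)) hfi1C (hx (i+1) (by omega) (by omega))) hh
    · have hi : i = i₀ := by omega
      subst hi
      rw [hval_top, hval_mid j hJ1 hltj]
      have hfj1C : f (j+1) ∈ C := hmem (j+1) (by omega) (by omega)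
      exact fun hh =>
        (mem_free.1 hγx (f (j+1)) hfj1C (hx (j+1) (by omega) (by omega))) hh.symm
    · omega
  intro a ha b hb hab v hva hvb
  by_cases haP : ∃ i, 1 ≤ i ∧ i ≤ i₀ ∧ a = f i
  · obtain ⟨i, hI1, hI2, rfl⟩ := haP
    by_cases hbP : ∃ j, 1 ≤ j ∧ j ≤ i₀ ∧ b = f j
    · obtain ⟨j, hJ1, hJ2, rfl⟩ := hbP
      have hij : i ≠ j := fun hEq => hab (by rw [hEq])
      exact fanpair i j hI1 hI2 hJ1 hJ2 hij
    · obtain ⟨hbC, hbv⟩ := hout b hb hbP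
      exact oneside i hI1 hI2 b hbC hbv
        (fun j hj1 hj2 hEq => hbP ⟨j, hj1, hj2, hEq⟩) v hva hvb
  · obtain ⟨haC, hav⟩ := hout a ha haP
    by_cases hbP : ∃ j, 1 ≤ j ∧ j ≤ i₀ ∧ b = f j
    · obtain ⟨j, hJ1, hJ2, rfl⟩ := hbP
      exact (oneside j hJ1 hJ2 a haC hav
        (fun j' hj1 hj2 hEq => haP ⟨j', hj1, hj2, hEq⟩) v hvb hva).symm
    · obtain ⟨hbC, hbv⟩ := hout b hb hbP
      rw [hav, hbv]
      exact hP a haC b hbC hab v hva hvb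

end Fan

section FL
variable {V E : Type*} [Fintype V] [Fintype E] [DecidableEq V] [DecidableEq E]
variable {ends : E → Sym2 V} {k : ℕ}

lemma FanData.mem' {C : Finset E} {π : E → Fin k} {e₀ : E} {x : V}
    (F : FanData ends k C π e₀ x) : ∀ i, 1 ≤ i → i ≤ F.p → F.f i ∈ insert e₀ C := by
  intro i h1 h2
  rcases Nat.lt_or_ge i 2 with h | h
  · have : i = 1 := by omega
    rw [this, F.h1]; exact Finset.mem_insert_self _ _
  · exact Finset.mem_insert_of_mem (F.hmem i h h2)

/-- transfer a fan (truncated to `p'`) along a Kempe swap whose component misses `x` -/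
noncomputable def fanTransfer {C : Finset E} {π : E → Fin k} {e₀ : E} {x : V}
    (F : FanData ends k C π e₀ x) (α β : Fin k) (v₀ : V)
    (hnx : ¬ conn ends k C π α β v₀ x) {p' : ℕ} (hp'1 : 1 ≤ p') (hp'2 : p' ≤ F.p)
    (hsafe : ∀ i, 2 ≤ i → i ≤ p' →
      π (F.f i) ∈ free ends k C (swap ends k C π α β v₀) (othD ends (F.f (i-1)) x)) :
    FanData ends k C (swap ends k C π α β v₀) e₀ x where
  p := p'
  f := F.f
  hp := hp'1
  h1 := F.h1
  hmem := fun i h1 h2 => F.hmem i h1 (le_trans h2 hp'2)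
  hx := fun i h1 h2 => F.hx i h1 (le_trans h2 hp'2)
  hinj := fun i j hi1 hi2 hj1 hj2 h =>
    F.hinj i j hi1 (le_trans hi2 hp'2) hj1 (le_trans hj2 hp'2) h
  hfree := by
    intro i h1 h2
    have hval : swap ends k C π α β v₀ (F.f i) = π (F.f i) :=
      swap_eq_at_vertex hnx (F.hx i (by omega) (le_trans h2 hp'2))
    rw [hval]
    exact hsafe i h1 h2
  hcol := by
    intro i j hi1 hi2 hj1 hj2 hne
    have hvi : swap ends k C π α β v₀ (F.f i) = π (F.f i) :=
      swap_eq_at_vertex hnx (F.hx i (by omega) (le_trans hi2 hp'2))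
    have hvj : swap ends k C π α β v₀ (F.f j) = π (F.f j) :=
      swap_eq_at_vertex hnx (F.hx j (by omega) (le_trans hj2 hp'2))
    rw [hvi, hvj]
    exact F.hcol i j hi1 (le_trans hi2 hp'2) hj1 (le_trans hj2 hp'2) hne

/-- The key extension lemma: a proper partial coloring can be extended to one more edge. -/
lemma extend_coloring (hloopless : ∀ e : E, ¬ (ends e).IsDiag)
    {C : Finset E} {π : E → Fin k} (hP : Proper ends k C π)
    {e₀ : E} (he₀ : e₀ ∉ C) {x y : V} (hxy : ends e₀ = s(x,y))
    (H1 : (inc ends C x).card + 1 ≤ k)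
    (H2 : ∀ z, z ≠ x → (inc ends C z).card + mult ends (insert e₀ C) x z ≤ k) :
    ∃ π', Proper ends k (insert e₀ C) π' := by
  classical
  by_contra hcon
  have hxe : x ∈ ends e₀ := by rw [hxy]; exact Sym2.mem_mk_left _ _
  obtain ⟨β, hβ⟩ : ∃ β, β ∈ free ends k C π x := by
    have h := @card_free_ge V E _ _ _ _ ends k C π x
    have : 0 < (free ends k C π x).card := by omega
    exact Finset.card_pos.1 this
  -- the endgame for a maximal fan with no common free color
  have endgame : ∀ F : FanData ends k C π e₀ x,
      (∀ i, 1 ≤ i → i ≤ F.p → ∀ γ, γ ∈ free ends k C π (othD ends (F.f i) x) →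
        γ ∉ free ends k C π x) →
      (¬ ∃ g, g ∈ C ∧ x ∈ ends g ∧ (∀ j, 1 ≤ j → j ≤ F.p → g ≠ F.f j) ∧
        π g ∈ free ends k C π (othD ends (F.f F.p) x) ∧
        (∀ j, 2 ≤ j → j ≤ F.p → π g ≠ π (F.f j))) →
      False := by
    intro F hA hne
    set p := F.p with hpdef
    set zp := othD ends (F.f p) x with hzpdef
    have hzx : ∀ i, 1 ≤ i → i ≤ p → othD ends (F.f i) x ≠ x :=
      fun i h1 h2 => othD_ne hloopless (F.hx i h1 h2)
    have hβzi : ∀ i, 1 ≤ i → i ≤ p → β ∉ free ends k C π (othD ends (F.f i) x) :=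
      fun i h1 h2 hmem => hA i h1 h2 β hmem hβ
    -- maximality: every color free at `zp` occurs in the fan
    have hmax : ∀ α ∈ free ends k C π zp, ∃ j, 2 ≤ j ∧ j ≤ p ∧ π (F.f j) = α := by
      intro α hα
      have hαx : α ∉ free ends k C π x := hA p F.hp le_rfl α hα
      rw [mem_free] at hαx
      push_neg at hαx
      obtain ⟨e, heC, hxe', heα⟩ := hαx
      by_cases hfan : ∃ j, 1 ≤ j ∧ j ≤ p ∧ e = F.f j
      · obtain ⟨j, hj1, hj2, rfl⟩ := hfan
        have hj2' : 2 ≤ j := by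
          rcases Nat.lt_or_ge j 2 with h | h
          · exfalso
            have : j = 1 := by omega
            rw [this, F.h1] at heC
            exact he₀ heC
          · exact h
        exact ⟨j, hj2', hj2, heα⟩
      · by_cases hfresh : ∃ j, 2 ≤ j ∧ j ≤ p ∧ π (F.f j) = α
        · exact hfresh
        · exfalso
          apply hne
          refine ⟨e, heC, hxe', ?_, by rw [heα]; exact hα, ?_⟩
          · intro j hj1 hj2 hEq
            exact hfan ⟨j, hj1, hj2, hEq⟩
          · intro j hj1 hj2 hEq
            exact hfresh ⟨j, hj1, hj2, by rw [← hEq, heα]⟩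
    -- counting : positions of the fan with other endpoint `zp`
    set P1 : Finset ℕ := (Finset.Icc 1 p).filter (fun i => othD ends (F.f i) x = zp)
      with hP1def
    have hpP1 : p ∈ P1 := by
      rw [hP1def, Finset.mem_filter, Finset.mem_Icc]
      exact ⟨⟨F.hp, le_rfl⟩, rfl⟩
    have hrle : P1.card ≤ mult ends (insert e₀ C) x zp := by
      rw [mult]
      apply Finset.card_le_card_of_injOn (fun i => F.f i)
      · intro i hi
        rw [Finset.mem_coe] at hi; simp only [hP1def, Finset.mem_filter, Finset.mem_Icc] at hi
        rw [Finset.mem_coe, Finset.mem_filter]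
        refine ⟨F.mem' i hi.1.1 hi.1.2, ?_⟩
        rw [ends_eq_of_mem (F.hx i hi.1.1 hi.1.2), hi.2]
      · intro i hi j hj hEq
        rw [Finset.coe_filter] at hi hj
        simp only [Set.mem_setOf_eq, Finset.mem_Icc] at hi hj
        exact F.hinj i j hi.1.1 hi.1.2 hj.1.1 hj.1.2 hEq
    have hfs : P1.card ≤ (free ends k C π zp).card := by
      have h1 := @card_free_ge V E _ _ _ _ ends k C π zp
      have h2 := H2 zp (hzx p F.hp le_rfl)
      omega
    -- find a good color α
    obtain ⟨α, hαzp, j, hj2, hjp, hπj, hzj⟩ : ∃ α ∈ free ends k C π zp,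
        ∃ j, 2 ≤ j ∧ j ≤ p ∧ π (F.f j) = α ∧ othD ends (F.f (j-1)) x ≠ zp := by
      by_contra hbad
      push_neg at hbad
      set B : Finset ℕ := (Finset.Icc 1 (p-1)).filter (fun i => othD ends (F.f i) x = zp)
        with hBdef
      have hinjmap : (free ends k C π zp).card ≤ B.card := by
        apply Finset.card_le_card_of_injOn
          (fun α => if hα : α ∈ free ends k C π zp then (hmax α hα).choose - 1 else 0)
        · intro α hα
          rw [Finset.mem_coe] at hα ⊢; simp only [dif_pos hα]
          obtain ⟨hc2, hcp, hcα⟩ := (hmax α hα).choose_spec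
          have hz := hbad α hα (hmax α hα).choose hc2 hcp hcα
          rw [hBdef, Finset.mem_filter, Finset.mem_Icc]
          exact ⟨⟨by omega, by omega⟩, hz⟩
        · intro a ha b hb hEq
          rw [Finset.mem_coe] at ha hb
          simp only [] at hEq
          rw [dif_pos ha, dif_pos hb] at hEq
          obtain ⟨ha2, hap, haα⟩ := (hmax a ha).choose_spec
          obtain ⟨hb2, hbp, hbα⟩ := (hmax b hb).choose_spec
          have : (hmax a ha).choose = (hmax b hb).choose := by omega
          rw [← haα, ← hbα, this]
      have hP1B : P1 = insert p B := by
        ext i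
        rw [hP1def, hBdef, Finset.mem_insert, Finset.mem_filter, Finset.mem_filter,
          Finset.mem_Icc, Finset.mem_Icc]
        constructor
        · rintro ⟨⟨hi1, hi2⟩, hiz⟩
          rcases Nat.eq_or_lt_of_le hi2 with h | h
          · exact Or.inl h
          · exact Or.inr ⟨⟨hi1, by omega⟩, hiz⟩
        · rintro (rfl | ⟨⟨hi1, hi2⟩, hiz⟩)
          · exact ⟨⟨F.hp, le_rfl⟩, rfl⟩
          · have hp1 := F.hp
            exact ⟨⟨hi1, by omega⟩, hiz⟩
      have hpnB : p ∉ B := by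
        rw [hBdef, Finset.mem_filter, Finset.mem_Icc]
        have := F.hp
        omega
      have : P1.card = B.card + 1 := by rw [hP1B, Finset.card_insert_of_notMem hpnB]
      omega
    have hαβ : α ≠ β := fun h => (hA p F.hp le_rfl α hαzp) (h ▸ hβ)
    have hαzj : α ∈ free ends k C π (othD ends (F.f (j-1)) x) := by
      have := F.hfree j hj2 hjp
      rwa [hπj] at this
    have hβzp : β ∉ free ends k C π zp := hβzi p F.hp le_rfl
    have hβzj : β ∉ free ends k C π (othD ends (F.f (j-1)) x) :=
      hβzi (j-1) (by omega) (by omega)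
    -- degree-one facts in the αβ-subgraph
    have habdeg : ∀ (v : V) (γ' : Fin k), (γ' = α ∨ γ' = β) → γ' ∈ free ends k C π v →
        (inc ends (C.filter (fun e => π e = α ∨ π e = β)) v).card ≤ 1 := by
      intro v γ' hγ' hγfree
      set D := C.filter (fun e => π e = α ∨ π e = β) with hD
      have hsub : inc ends D v ⊆ inc ends C v := inc_mono (Finset.filter_subset _ _) v
      have hinj : Set.InjOn π (inc ends D v : Set E) :=
        (proper_injOn hP v).mono (by exact_mod_cast hsub)
      have h1 : (inc ends D v).card = ((inc ends D v).image π).card :=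
        (Finset.card_image_of_injOn hinj).symm
      have h2 : (inc ends D v).image π ⊆ {α, β} \ {γ'} := by
        intro c hc
        obtain ⟨e, he, rfl⟩ := Finset.mem_image.1 hc
        rw [mem_inc, hD, Finset.mem_filter] at he
        rw [Finset.mem_sdiff, Finset.mem_singleton]
        refine ⟨by simpa using he.1.2, ?_⟩
        intro hEq
        exact (mem_free.1 hγfree e he.1.1 he.2) (by rw [hEq])
      have h3 : ({α, β} \ {γ'} : Finset (Fin k)).card ≤ 1 := by
        rcases hγ' with rfl | rfl
        · have hsub2 : ({γ', β} \ {γ'} : Finset (Fin k)) ⊆ {β} := by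
            intro c hc
            rw [Finset.mem_sdiff, Finset.mem_insert, Finset.mem_singleton] at hc
            rcases hc.1 with rfl | rfl
            · exact absurd hc.2 (by simp)
            · exact Finset.mem_singleton_self _
          have := Finset.card_le_card hsub2
          simpa using this
        · have hsub2 : ({α, γ'} \ {γ'} : Finset (Fin k)) ⊆ {α} := by
            intro c hc
            rw [Finset.mem_sdiff, Finset.mem_insert, Finset.mem_singleton] at hc
            rcases hc.1 with rfl | rfl
            · exact Finset.mem_singleton_self _
            · exact absurd hc.2 (by simp)
          have := Finset.card_le_card hsub2
          simpa using this
      calc (inc ends D v).card = ((inc ends D v).image π).card := h1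
        _ ≤ _ := Finset.card_le_card h2
        _ ≤ 1 := h3
    have hdegx : (inc ends (C.filter (fun e => π e = α ∨ π e = β)) x).card ≤ 1 :=
      habdeg x β (Or.inr rfl) hβ
    have hdegzp : (inc ends (C.filter (fun e => π e = α ∨ π e = β)) zp).card ≤ 1 :=
      habdeg zp α (Or.inl rfl) hαzp
    have hdegzj : (inc ends (C.filter (fun e => π e = α ∨ π e = β))
        (othD ends (F.f (j-1)) x)).card ≤ 1 :=
      habdeg _ α (Or.inl rfl) hαzj
    -- case split on components
    by_cases hxconn : conn ends k C π α β zp x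
    · -- x is in the component of zp; then z_{j-1} is not
      have hnz : ¬ conn ends k C π α β zp (othD ends (F.f (j-1)) x) := by
        intro hcz
        exact no_three_ends hloopless hP (hzx p F.hp le_rfl)
          (Ne.symm hzj) (Ne.symm (hzx (j-1) (by omega) (by omega)))
          hxconn hcz hdegzp hdegx hdegzj
      have hnx' : ¬ conn ends k C π α β (othD ends (F.f (j-1)) x) x := by
        intro h
        exact hnz (conn_trans hxconn (conn_symm h))
      have hsafe : ∀ i, 2 ≤ i → i ≤ j-1 → π (F.f i) ∈
          free ends k C (swap ends k C π α β (othD ends (F.f (j-1)) x))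
            (othD ends (F.f (i-1)) x) := by
        intro i h2 hij
        have hfr := F.hfree i h2 (by omega)
        have hnα : π (F.f i) ≠ α := by
          intro hEq
          exact F.hcol i j h2 (by omega) hj2 hjp (by omega) (by rw [hEq, hπj])
        have hnβ : π (F.f i) ≠ β := by
          intro hEq
          exact hβzi (i-1) (by omega) (by omega) (hEq ▸ hfr)
        exact (swap_free_other hnα hnβ).2 hfr
      apply hcon
      refine rotate_color hloopless (swap_proper hαβ hP) he₀
        (fanTransfer F α β (othD ends (F.f (j-1)) x) hnx' (p' := j-1) (by omega) (by omega)
          hsafe) (i₀ := j-1) (γ := β) (by omega) le_rfl ?_ ?_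
      · rw [swap_free_eq hnx']; exact hβ
      · exact (swap_free_beta hαβ Relation.ReflTransGen.refl).2 hαzj
    · by_cases hzjconn : conn ends k C π α β zp (othD ends (F.f (j-1)) x)
      · -- seed zp, truncate at j-1
        have hsafe : ∀ i, 2 ≤ i → i ≤ j-1 → π (F.f i) ∈
            free ends k C (swap ends k C π α β zp) (othD ends (F.f (i-1)) x) := by
          intro i h2 hij
          have hfr := F.hfree i h2 (by omega)
          have hnα : π (F.f i) ≠ α := by
            intro hEq
            exact F.hcol i j h2 (by omega) hj2 hjp (by omega) (by rw [hEq, hπj])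
          have hnβ : π (F.f i) ≠ β := by
            intro hEq
            exact hβzi (i-1) (by omega) (by omega) (hEq ▸ hfr)
          exact (swap_free_other hnα hnβ).2 hfr
        apply hcon
        refine rotate_color hloopless (swap_proper hαβ hP) he₀
          (fanTransfer F α β zp hxconn (p' := j-1) (by omega) (by omega) hsafe)
          (i₀ := j-1) (γ := β) (by omega) le_rfl ?_ ?_
        · rw [swap_free_eq hxconn]; exact hβ
        · exact (swap_free_beta hαβ hzjconn).2 hαzj
      · -- seed zp, full fan
        have hsafe : ∀ i, 2 ≤ i → i ≤ p → π (F.f i) ∈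
            free ends k C (swap ends k C π α β zp) (othD ends (F.f (i-1)) x) := by
          intro i h2 hip
          have hfr := F.hfree i h2 hip
          by_cases hij : i = j
          · subst hij
            rw [hπj] at hfr ⊢
            rw [swap_free_eq hzjconn]
            exact hαzj
          · have hnα : π (F.f i) ≠ α := by
              intro hEq
              exact F.hcol i j h2 hip hj2 hjp hij (by rw [hEq, hπj])
            have hnβ : π (F.f i) ≠ β := by
              intro hEq
              exact hβzi (i-1) (by omega) (by omega) (hEq ▸ hfr)
            exact (swap_free_other hnα hnβ).2 hfr
        apply hcon
        refine rotate_color hloopless (swap_proper hαβ hP) he₀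
          (fanTransfer F α β zp hxconn (p' := p) F.hp le_rfl hsafe)
          (i₀ := p) (γ := β) F.hp le_rfl ?_ ?_
        · rw [swap_free_eq hxconn]; exact hβ
        · exact (swap_free_beta hαβ Relation.ReflTransGen.refl).2 hαzp
  -- fan extension
  have extend : ∀ F : FanData ends k C π e₀ x,
      (∃ g, g ∈ C ∧ x ∈ ends g ∧ (∀ j, 1 ≤ j → j ≤ F.p → g ≠ F.f j) ∧
        π g ∈ free ends k C π (othD ends (F.f F.p) x) ∧
        (∀ j, 2 ≤ j → j ≤ F.p → π g ≠ π (F.f j))) →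
      ∃ F' : FanData ends k C π e₀ x, F'.p = F.p + 1 := by
    rintro F ⟨g, hgC, hgx, hgnew, hgfree, hgfresh⟩
    have hp1 := F.hp
    refine ⟨⟨F.p + 1, fun i => if i = F.p + 1 then g else F.f i, by omega,
      ?_, ?_, ?_, ?_, ?_, ?_⟩, rfl⟩
    · show (if 1 = F.p + 1 then g else F.f 1) = e₀
      rw [if_neg (by omega), F.h1]
    · intro i h1 h2
      show (if i = F.p + 1 then g else F.f i) ∈ C
      by_cases h : i = F.p + 1
      · rw [if_pos h]; exact hgC
      · rw [if_neg h]; exact F.hmem i h1 (by omega)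
    · intro i h1 h2
      show x ∈ ends (if i = F.p + 1 then g else F.f i)
      by_cases h : i = F.p + 1
      · rw [if_pos h]; exact hgx
      · rw [if_neg h]; exact F.hx i h1 (by omega)
    · intro i j hi1 hi2 hj1 hj2 hEq
      by_cases h : i = F.p + 1 <;> by_cases h' : j = F.p + 1
      · omega
      · rw [if_pos h, if_neg h'] at hEq
        exact absurd hEq (hgnew j hj1 (by omega))
      · rw [if_neg h, if_pos h'] at hEq
        exact absurd hEq.symm (hgnew i hi1 (by omega))
      · rw [if_neg h, if_neg h'] at hEq
        exact F.hinj i j hi1 (by omega) hj1 (by omega) hEq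
    · intro i h1 h2
      by_cases h : i = F.p + 1
      · subst h
        show π (if F.p + 1 = F.p + 1 then g else F.f (F.p+1)) ∈
          free ends k C π (othD ends (if F.p + 1 - 1 = F.p + 1 then g else F.f (F.p + 1 - 1)) x)
        rw [if_pos rfl, if_neg (by omega)]
        have : F.p + 1 - 1 = F.p := by omega
        rw [this]
        exact hgfree
      · show π (if i = F.p + 1 then g else F.f i) ∈
          free ends k C π (othD ends (if i - 1 = F.p + 1 then g else F.f (i-1)) x)
        rw [if_neg h, if_neg (by omega)]
        exact F.hfree i h1 (by omega)
    · intro i j hi1 hi2 hj1 hj2 hne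
      show π (if i = F.p + 1 then g else F.f i) ≠ π (if j = F.p + 1 then g else F.f j)
      by_cases h : i = F.p + 1 <;> by_cases h' : j = F.p + 1
      · omega
      · rw [if_pos h, if_neg h']
        exact hgfresh j hj1 (by omega)
      · rw [if_neg h, if_pos h']
        exact fun hh => hgfresh i hi1 (by omega) hh.symm
      · rw [if_neg h, if_neg h']
        exact F.hcol i j hi1 (by omega) hj1 (by omega) hne
  -- main induction on the room left for the fan
  have main : ∀ m (F : FanData ends k C π e₀ x), k + 1 - F.p ≤ m → False := by
    intro m
    induction m with
    | zero =>
      intro F hF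
      by_cases hA : ∃ i, 1 ≤ i ∧ i ≤ F.p ∧ ∃ γ, γ ∈ free ends k C π (othD ends (F.f i) x) ∧
          γ ∈ free ends k C π x
      · obtain ⟨i, h1, h2, γ, hγz, hγx⟩ := hA
        exact hcon (rotate_color hloopless hP he₀ F h1 h2 hγx hγz)
      · by_cases hext : ∃ g, g ∈ C ∧ x ∈ ends g ∧ (∀ j, 1 ≤ j → j ≤ F.p → g ≠ F.f j) ∧
            π g ∈ free ends k C π (othD ends (F.f F.p) x) ∧
            (∀ j, 2 ≤ j → j ≤ F.p → π g ≠ π (F.f j))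
        · obtain ⟨F', hF'⟩ := extend F hext
          have := F'.p_le
          omega
        · push_neg at hA
          exact endgame F hA hext
    | succ m ih =>
      intro F hF
      by_cases hA : ∃ i, 1 ≤ i ∧ i ≤ F.p ∧ ∃ γ, γ ∈ free ends k C π (othD ends (F.f i) x) ∧
          γ ∈ free ends k C π x
      · obtain ⟨i, h1, h2, γ, hγz, hγx⟩ := hA
        exact hcon (rotate_color hloopless hP he₀ F h1 h2 hγx hγz)
      · by_cases hext : ∃ g, g ∈ C ∧ x ∈ ends g ∧ (∀ j, 1 ≤ j → j ≤ F.p → g ≠ F.f j) ∧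
            π g ∈ free ends k C π (othD ends (F.f F.p) x) ∧
            (∀ j, 2 ≤ j → j ≤ F.p → π g ≠ π (F.f j))
        · obtain ⟨F', hF'⟩ := extend F hext
          exact ih F' (by omega)
        · push_neg at hA
          exact endgame F hA hext
  -- kick off with the trivial fan
  have F₀ : FanData ends k C π e₀ x :=
    ⟨1, fun _ => e₀, le_rfl, rfl,
      fun i h1 h2 => absurd (h1.trans h2) (by omega),
      fun i _ _ => hxe,
      fun i j h1 h2 h3 h4 _ => by omega,
      fun i h1 h2 => absurd (h1.trans h2) (by omega),
      fun i j h1 h2 h3 h4 h5 => absurd (h1.trans h2) (by omega)⟩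
  exact main (k+1) F₀ (Nat.sub_le _ _)

end FL

section Star
variable {V E : Type*} [Fintype V] [Fintype E] [DecidableEq V] [DecidableEq E]
variable {ends : E → Sym2 V} {k : ℕ}

variable (ends) in
/-- multiplicity of vertex `v` within edge set `s` -/
def muS (s : Finset E) (v : V) : ℕ :=
  Finset.univ.sup (fun u : V => if u ≠ v then (s.filter (fun e => ends e = s(u, v))).card else 0)

lemma mult_le_muS {s : Finset E} {x z : V} (h : x ≠ z) :
    mult ends s x z ≤ muS ends s z := by
  have h1 := Finset.le_sup (f := fun u : V =>
    if u ≠ z then (s.filter (fun e => ends e = s(u, z))).card else 0) (Finset.mem_univ x)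
  have h2 : (fun u : V => if u ≠ z then (s.filter (fun e => ends e = s(u, z))).card else 0) x
      = mult ends s x z := by
    simp only [if_pos h]
    rfl
  rw [if_pos h] at h1; exact h1

lemma muS_mono {s t : Finset E} (h : s ⊆ t) (v : V) : muS ends s v ≤ muS ends t v := by
  apply Finset.sup_mono_fun
  intro u _
  split
  · exact Finset.card_le_card (Finset.filter_subset_filter _ h)
  · exact le_rfl

lemma H1gen {s C : Finset E} {e₀ : E} {x : V} (hCs : C ⊆ s) (he₀s : e₀ ∈ s)
    (he₀C : e₀ ∉ C) (hx : x ∈ ends e₀) :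
    (inc ends C x).card + 1 ≤ (inc ends s x).card := by
  have hsub : insert e₀ (inc ends C x) ⊆ inc ends s x := by
    intro e he
    rcases Finset.mem_insert.1 he with rfl | he
    · exact mem_inc.2 ⟨he₀s, hx⟩
    · rw [mem_inc] at he ⊢
      exact ⟨hCs he.1, he.2⟩
  have hni : e₀ ∉ inc ends C x := fun h => he₀C (mem_inc.1 h).1
  calc (inc ends C x).card + 1 = (insert e₀ (inc ends C x)).card := by
        rw [Finset.card_insert_of_notMem hni]
    _ ≤ (inc ends s x).card := Finset.card_le_card hsub

lemma H2gen {s C : Finset E} {e₀ : E} {x z : V} (hCs : C ⊆ s) (he₀s : e₀ ∈ s)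
    (he₀C : e₀ ∉ C) (hbound : (inc ends s z).card + mult ends s x z ≤ k) :
    (inc ends C z).card + mult ends (insert e₀ C) x z ≤ k := by
  classical
  set T := inc ends s z with hT
  set P := s.filter (fun e => ends e = s(x,z)) with hPdef
  set PC := (insert e₀ C).filter (fun e => ends e = s(x,z)) with hPCdef
  have hPCP : PC ⊆ P := by
    intro e he
    rw [hPCdef, Finset.mem_filter] at he
    rw [hPdef, Finset.mem_filter]
    refine ⟨?_, he.2⟩
    rcases Finset.mem_insert.1 he.1 with rfl | h
    · exact he₀s
    · exact hCs h
  have hPT : P ⊆ T := by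
    intro e he
    rw [hPdef, Finset.mem_filter] at he
    rw [hT, mem_inc]
    exact ⟨he.1, by rw [he.2]; exact Sym2.mem_mk_right _ _⟩
  have hsd : P \ insert e₀ C = P \ PC := by
    ext e
    simp only [Finset.mem_sdiff, hPCdef, hPdef, Finset.mem_filter]
    constructor
    · rintro ⟨h1, h2⟩
      exact ⟨h1, fun hh => h2 hh.1⟩
    · rintro ⟨h1, h2⟩
      exact ⟨h1, fun hh => h2 ⟨hh, h1.2⟩⟩
  have hcard_sd : (P \ insert e₀ C).card = P.card - PC.card := by
    rw [hsd, Finset.card_sdiff_of_subset hPCP]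
  have hdisj : Disjoint (inc ends C z) (P \ insert e₀ C) := by
    rw [Finset.disjoint_left]
    intro e he1 he2
    rw [Finset.mem_sdiff] at he2
    exact he2.2 (Finset.mem_insert_of_mem (mem_inc.1 he1).1)
  have hsubU : inc ends C z ∪ (P \ insert e₀ C) ⊆ T := by
    intro e he
    rcases Finset.mem_union.1 he with h | h
    · rw [mem_inc] at h
      rw [hT, mem_inc]
      exact ⟨hCs h.1, h.2⟩
    · exact hPT (Finset.mem_sdiff.1 h).1
  have hPCle : PC.card ≤ P.card := Finset.card_le_card hPCP
  have hmultP : mult ends s x z = P.card := rfl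
  have hmultPC : mult ends (insert e₀ C) x z = PC.card := rfl
  by_cases hze : z ∈ ends e₀
  · have he₀T : e₀ ∈ T := mem_inc.2 ⟨he₀s, hze⟩
    have hni : e₀ ∉ inc ends C z ∪ (P \ insert e₀ C) := by
      intro h
      rcases Finset.mem_union.1 h with h | h
      · exact he₀C (mem_inc.1 h).1
      · exact (Finset.mem_sdiff.1 h).2 (Finset.mem_insert_self _ _)
    have hsubU' : insert e₀ (inc ends C z ∪ (P \ insert e₀ C)) ⊆ T := by
      intro e he
      rcases Finset.mem_insert.1 he with rfl | he
      · exact he₀T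
      · exact hsubU he
    have hc := Finset.card_le_card hsubU'
    rw [Finset.card_insert_of_notMem hni, Finset.card_union_of_disjoint hdisj,
      hcard_sd] at hc
    rw [hmultPC]
    rw [hmultP] at hbound
    omega
  · have hc := Finset.card_le_card hsubU
    rw [Finset.card_union_of_disjoint hdisj, hcard_sd] at hc
    rw [hmultPC]
    rw [hmultP] at hbound
    omega

/-- Existence of a proper `k`-edge-coloring when vertices of "excess" `deg + μ > k`
form a stable set. -/
theorem proper_coloring_exists (hloopless : ∀ e : E, ¬ (ends e).IsDiag) (hk : 0 < k)
    (s : Finset E)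
    (hdeg : ∀ v, (inc ends s v).card ≤ k)
    (hstab : ∀ e ∈ s, ∀ u w, ends e = s(u,w) →
      ¬(k < (inc ends s u).card + muS ends s u ∧ k < (inc ends s w).card + muS ends s w)) :
    ∃ π : E → Fin k, Proper ends k s π := by
  classical
  set Sv : V → Prop := fun v => k < (inc ends s v).card + muS ends s v with hSv
  set N : Finset E := s.filter (fun e => ∀ u ∈ ends e, ¬ Sv u) with hN
  have hNs : N ⊆ s := Finset.filter_subset _ _
  -- phase 1 : color subsets of N
  have phase1 : ∀ n (t : Finset E), t ⊆ N → t.card = n → ∃ π, Proper ends k t π := by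
    intro n
    induction n with
    | zero =>
      intro t _ ht
      rw [Finset.card_eq_zero] at ht
      subst ht
      exact ⟨fun _ => ⟨0, hk⟩, fun e he => absurd he (Finset.notMem_empty _)⟩
    | succ n ih =>
      intro t htN htc
      have hne : t.Nonempty := Finset.card_pos.1 (by omega)
      obtain ⟨e₀, he₀t⟩ := hne
      set C := t.erase e₀ with hC
      have hCN : C ⊆ N := (Finset.erase_subset _ _).trans htN
      obtain ⟨π, hπ⟩ := ih C hCN (by rw [hC, Finset.card_erase_of_mem he₀t]; omega)
      obtain ⟨x, w0, hends⟩ := sym2_exists_rep (ends e₀)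
      have hxe : x ∈ ends e₀ := by rw [hends]; exact Sym2.mem_mk_left _ _
      have hCs : C ⊆ s := hCN.trans hNs
      have he₀C : e₀ ∉ C := Finset.notMem_erase _ _
      have he₀s : e₀ ∈ s := hNs (htN he₀t)
      have hinsN : insert e₀ C ⊆ N := by
        intro e he
        rcases Finset.mem_insert.1 he with rfl | he
        · exact htN he₀t
        · exact hCN he
      obtain ⟨π', hπ'⟩ := extend_coloring hloopless hπ he₀C hends
        (by
          have := H1gen hCs he₀s he₀C hxe
          have := hdeg x
          omega)
        (by
          intro z hzx
          by_cases hz : Sv z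
          · -- z is a "big" vertex: no edge of N touches it
            have h1 : inc ends C z = ∅ := by
              rw [Finset.eq_empty_iff_forall_notMem]
              intro e he
              rw [mem_inc] at he
              have := hCN he.1
              rw [hN, Finset.mem_filter] at this
              exact this.2 z he.2 hz
            have h2 : mult ends (insert e₀ C) x z = 0 := by
              rw [mult, Finset.card_eq_zero, Finset.filter_eq_empty_iff]
              intro e he hee
              have := hinsN he
              rw [hN, Finset.mem_filter] at this
              exact this.2 z (by rw [hee]; exact Sym2.mem_mk_right _ _) hz
            rw [h1, h2, Finset.card_empty]
            omega
          · rw [hSv] at hz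
            push_neg at hz
            have hmle : mult ends s x z ≤ muS ends s z := mult_le_muS (Ne.symm hzx)
            exact H2gen hCs he₀s he₀C (by omega))
      rw [hC, Finset.insert_erase he₀t] at hπ'
      exact ⟨π', hπ'⟩
  -- phase 2 : add the edges incident to big vertices
  have phase2 : ∀ n (u : Finset E), u ⊆ s \ N → u.card = n →
      ∃ π, Proper ends k (N ∪ u) π := by
    intro n
    induction n with
    | zero =>
      intro u _ hu
      rw [Finset.card_eq_zero] at hu
      subst hu
      rw [Finset.union_empty]
      exact phase1 N.card N le_rfl rfl
    | succ n ih =>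
      intro u huM huc
      have hne : u.Nonempty := Finset.card_pos.1 (by omega)
      obtain ⟨e₀, he₀u⟩ := hne
      have he₀M : e₀ ∈ s \ N := huM he₀u
      have he₀s : e₀ ∈ s := (Finset.mem_sdiff.1 he₀M).1
      have he₀N : e₀ ∉ N := (Finset.mem_sdiff.1 he₀M).2
      set C := N ∪ u.erase e₀ with hC
      have hCs : C ⊆ s := by
        intro e he
        rcases Finset.mem_union.1 he with h | h
        · exact hNs h
        · exact (Finset.mem_sdiff.1 (huM (Finset.mem_of_mem_erase h))).1
      have he₀C : e₀ ∉ C := by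
        rw [hC, Finset.mem_union]
        rintro (h | h)
        · exact he₀N h
        · exact Finset.notMem_erase _ _ h
      obtain ⟨π, hπ⟩ := ih (u.erase e₀) ((Finset.erase_subset _ _).trans huM)
        (by rw [Finset.card_erase_of_mem he₀u]; omega)
      rw [← hC] at hπ
      -- find the big endpoint of e₀
      have : ¬ (∀ v ∈ ends e₀, ¬ Sv v) := by
        intro h
        exact he₀N (by rw [hN, Finset.mem_filter]; exact ⟨he₀s, h⟩)
      push_neg at this
      obtain ⟨x, hxe, hSx⟩ := this
      obtain ⟨x', y', hends'⟩ := sym2_exists_rep (ends e₀)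
      -- write ends e₀ = s(x, y₀)
      have hends : ends e₀ = s(x, othD ends e₀ x) := ends_eq_of_mem hxe
      obtain ⟨π', hπ'⟩ := extend_coloring hloopless hπ he₀C hends
        (by
          have := H1gen hCs he₀s he₀C hxe
          have := hdeg x
          omega)
        (by
          intro z hzx
          by_cases hz : Sv z
          · have h2 : mult ends (insert e₀ C) x z = 0 := by
              rw [mult, Finset.card_eq_zero, Finset.filter_eq_empty_iff]
              intro e he hee
              have hes : e ∈ s := by
                rcases Finset.mem_insert.1 he with rfl | he'
                · exact he₀s
                · exact hCs he'
              exact hstab e hes x z hee ⟨hSx, hz⟩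
            have h1 : (inc ends C z).card ≤ k := by
              calc (inc ends C z).card ≤ (inc ends s z).card :=
                    Finset.card_le_card (inc_mono hCs z)
                _ ≤ k := hdeg z
            omega
          · rw [hSv] at hz
            push_neg at hz
            have hmle : mult ends s x z ≤ muS ends s z := mult_le_muS (Ne.symm hzx)
            exact H2gen hCs he₀s he₀C (by omega))
      have : insert e₀ C = N ∪ u := by
        rw [hC, ← Finset.union_insert, Finset.insert_erase he₀u]
      rw [this] at hπ'
      exact ⟨π', hπ'⟩
  obtain ⟨π, hπ⟩ := phase2 (s \ N).card (s \ N) le_rfl rfl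
  rw [Finset.union_sdiff_of_subset hNs] at hπ
  exact ⟨π, hπ⟩

end Star

section Main
variable {V E : Type*} [Fintype V] [Fintype E] [DecidableEq V] [DecidableEq E]
variable {ends : E → Sym2 V} {k : ℕ}

lemma inc_erase {s : Finset E} {e : E} (w : V) :
    inc ends (s.erase e) w = (inc ends s w).erase e := by
  ext f
  simp only [mem_inc, Finset.mem_erase]
  tauto

lemma card_inc_erase_mem {s : Finset E} {e : E} {w : V} (he : e ∈ s) (hw : w ∈ ends e) :
    (inc ends (s.erase e) w).card = (inc ends s w).card - 1 := by
  rw [inc_erase, Finset.card_erase_of_mem (mem_inc.2 ⟨he, hw⟩)]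

lemma card_inc_erase_not_mem {s : Finset E} {e : E} {w : V} (hw : w ∉ ends e) :
    (inc ends (s.erase e) w).card = (inc ends s w).card := by
  rw [inc_erase, Finset.erase_eq_of_notMem (fun h => hw (mem_inc.1 h).2)]

lemma image_erase_subset {s : Finset E} {e : E} (π' : E → Fin k) (γ : Fin k) (w : V) :
    (inc ends (s.erase e) w).image π' ⊆ (inc ends s w).image (Function.update π' e γ) := by
  intro d hd
  obtain ⟨f, hf, rfl⟩ := Finset.mem_image.1 hd
  rw [inc_erase, Finset.mem_erase] at hf
  refine Finset.mem_image.2 ⟨f, hf.2, ?_⟩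
  rw [Function.update_of_ne hf.1]

theorem demands_aux (hloopless : ∀ e : E, ¬ (ends e).IsDiag) (hk : 0 < k) :
    ∀ n (s : Finset E) (c : V → ℕ), s.card = n →
    (∀ v, c v ≤ min (inc ends s v).card k) →
    (∀ e ∈ s, ∀ u w, ends e = s(u,w) →
      ¬(k < c u + muS ends s u ∧ k < c w + muS ends s w)) →
    ∃ π : E → Fin k, ∀ v, c v ≤ ((inc ends s v).image π).card := by
  intro n
  induction n with
  | zero =>
    intro s c hcard hc _
    rw [Finset.card_eq_zero] at hcard
    subst hcard
    refine ⟨fun _ => ⟨0, hk⟩, fun v => ?_⟩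
    have := hc v
    simp only [inc, Finset.filter_empty, Finset.card_empty] at this ⊢
    omega
  | succ n ih =>
    intro s c hcard hc hstab
    by_cases hslack : ∃ e ∈ s, ∃ u, u ∈ ends e ∧ c u < (inc ends s u).card
    · obtain ⟨e, hes, u, hue, hcu⟩ := hslack
      set v := othD ends e u with hvdef
      have hve : v ∈ ends e := othD_mem hue
      have hvu : v ≠ u := othD_ne hloopless hue
      have hends : ends e = s(u, v) := ends_eq_of_mem hue
      have hmemuv : ∀ w, w ∈ ends e → w = u ∨ w = v := by
        intro w hw
        rw [hends, Sym2.mem_iff] at hw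
        exact hw
      have hcard' : (s.erase e).card = n := by
        rw [Finset.card_erase_of_mem hes]; omega
      have hstab' : ∀ c' : V → ℕ, (∀ w, c' w ≤ c w) →
          (∀ e' ∈ s.erase e, ∀ u' w', ends e' = s(u',w') →
            ¬(k < c' u' + muS ends (s.erase e) u' ∧ k < c' w' + muS ends (s.erase e) w')) := by
        intro c' hc' e' he' u' w' hends' ⟨h1, h2⟩
        have hsub := Finset.erase_subset e s
        apply hstab e' (hsub he') u' w' hends'
        constructor
        · calc k < c' u' + muS ends (s.erase e) u' := h1
            _ ≤ c u' + muS ends s u' := add_le_add (hc' u') (muS_mono hsub u')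
        · calc k < c' w' + muS ends (s.erase e) w' := h2
            _ ≤ c w' + muS ends s w' := add_le_add (hc' w') (muS_mono hsub w')
      by_cases hv2 : c v < (inc ends s v).card
      · -- both endpoints slack: just remove the edge
        obtain ⟨π', hπ'⟩ := ih (s.erase e) c hcard'
          (by
            intro w
            have hcw := hc w
            rw [le_min_iff] at hcw
            by_cases hwe : w ∈ ends e
            · have hlt : c w < (inc ends s w).card := by
                rcases hmemuv w hwe with rfl | rfl
                · exact hcu
                · exact hv2
              rw [card_inc_erase_mem hes hwe, le_min_iff]
              omega
            · rw [card_inc_erase_not_mem hwe]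
              exact hc w)
          (hstab' c (fun _ => le_rfl))
        refine ⟨Function.update π' e ⟨0, hk⟩, fun w => ?_⟩
        calc c w ≤ ((inc ends (s.erase e) w).image π').card := hπ' w
          _ ≤ _ := Finset.card_le_card (image_erase_subset π' _ w)
      · -- v is tight
      
        have hvt : (inc ends s v).card ≤ c v := by omega
        obtain ⟨π', hπ'⟩ := ih (s.erase e) (Function.update c v (c v - 1)) hcard'
          (by
            intro w
            have hcw := hc w
            rw [le_min_iff] at hcw
            by_cases hwv : w = v
            · subst hwv
              rw [Function.update_self, card_inc_erase_mem hes hve, le_min_iff]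
              omega
            · rw [Function.update_of_ne hwv]
              by_cases hwe : w ∈ ends e
              · have hlt : c w < (inc ends s w).card := by
                  rcases hmemuv w hwe with rfl | rfl
                  · exact hcu
                  · exact absurd rfl hwv
                rw [card_inc_erase_mem hes hwe, le_min_iff]
                omega
              · rw [card_inc_erase_not_mem hwe]
                exact hc w)
          (hstab' _ (by
            intro w
            by_cases hwv : w = v
            · subst hwv; rw [Function.update_self]; omega
            · rw [Function.update_of_ne hwv]))
        have hrecv : c v - 1 ≤ ((inc ends (s.erase e) v).image π').card := by
          have := hπ' v
          rwa [Function.update_self] at this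
        by_cases hfull : c v ≤ ((inc ends (s.erase e) v).image π').card
        · refine ⟨Function.update π' e ⟨0, hk⟩, fun w => ?_⟩
          by_cases hwv : w = v
          · subst hwv
            calc c v ≤ ((inc ends (s.erase e) v).image π').card := hfull
              _ ≤ _ := Finset.card_le_card (image_erase_subset π' _ v)
          · calc c w = Function.update c v (c v - 1) w := by rw [Function.update_of_ne hwv]
              _ ≤ ((inc ends (s.erase e) w).image π').card := hπ' w
              _ ≤ _ := Finset.card_le_card (image_erase_subset π' _ w)
        · obtain ⟨γ, hγ⟩ : ∃ γ, γ ∈ Finset.univ \ (inc ends (s.erase e) v).image π' := by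
            apply Finset.card_pos.1
            rw [Finset.card_sdiff_of_subset (Finset.subset_univ _), Finset.card_univ, Fintype.card_fin]
            have h1 : ((inc ends (s.erase e) v).image π').card ≤ c v - 1 := by omega
            have h2 := hc v
            omega
          rw [Finset.mem_sdiff] at hγ
          refine ⟨Function.update π' e γ, fun w => ?_⟩
          by_cases hwv : w = v
          · subst hwv
            have hsub : insert γ ((inc ends (s.erase e) v).image π') ⊆
                (inc ends s v).image (Function.update π' e γ) := by
              intro d hd
              rcases Finset.mem_insert.1 hd with rfl | hd
              · refine Finset.mem_image.2 ⟨e, mem_inc.2 ⟨hes, hve⟩, ?_⟩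
                rw [Function.update_self]
              · exact image_erase_subset π' γ v hd
            have hcardins : (insert γ ((inc ends (s.erase e) v).image π')).card
                = ((inc ends (s.erase e) v).image π').card + 1 := by
              rw [Finset.card_insert_of_notMem hγ.2]
            have := Finset.card_le_card hsub
            omega
          · calc c w = Function.update c v (c v - 1) w := by rw [Function.update_of_ne hwv]
              _ ≤ ((inc ends (s.erase e) w).image π').card := hπ' w
              _ ≤ _ := Finset.card_le_card (image_erase_subset π' _ w)
    · -- every edge has both endpoints tight: we need a proper coloring
      push_neg at hslack
      obtain ⟨π, hπ⟩ := proper_coloring_exists hloopless hk s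
        (by
          intro w
          by_cases hne : (inc ends s w).Nonempty
          · obtain ⟨f, hf⟩ := hne
            rw [mem_inc] at hf
            have htight := hslack f hf.1 w hf.2
            have := hc w
            omega
          · rw [Finset.not_nonempty_iff_eq_empty] at hne
            rw [hne, Finset.card_empty]
            omega)
        (by
          intro e he u w hends ⟨h1, h2⟩
          have hu : u ∈ ends e := by rw [hends]; exact Sym2.mem_mk_left _ _
          have hw : w ∈ ends e := by rw [hends]; exact Sym2.mem_mk_right _ _
          apply hstab e he u w hends
          constructor
          · exact lt_of_lt_of_le h1 (add_le_add_left (hslack e he u hu) _)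
          · exact lt_of_lt_of_le h2 (add_le_add_left (hslack e he w hw) _))
      refine ⟨π, fun w => ?_⟩
      have himg : ((inc ends s w).image π).card = (inc ends s w).card :=
        card_colorsAt_of_proper hπ w
      have := hc w
      omega

end Main

/-- Theorem 6 of the paper: for a multigraph `G`, a positive integer `k`, and a demand
function `c : V → ℤ≥0` with `c(v) ≤ min{deg(v), k}` for all `v`, if
`S := {v : c(v) + μ(v) > k}` is a stable set, then there is a color assignment
`π : E → [k]` with `|π(δ(v))| ≥ c(v)` for every vertex `v`. -/
theorem gupta_stable_set_weighted
    {V E : Type*} [Fintype V] [Fintype E] [DecidableEq V] [DecidableEq E]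
    (ends : E → Sym2 V) (hloopless : ∀ e : E, ¬ (ends e).IsDiag)
    (k : ℕ) (hk : 0 < k)
    (c : V → ℕ) (hc : ∀ v : V, c v ≤ min (degree ends v) k)
    (hstable : ∀ (e : E) (u w : V), ends e = s(u, w) →
      ¬(k < c u + vertexMultiplicity ends u ∧ k < c w + vertexMultiplicity ends w)) :
    ∃ π : E → Fin k, ∀ v : V,
      c v ≤ ((edgeStar ends v).image π).card := by
  have hinc : ∀ v, inc ends (Finset.univ : Finset E) v = edgeStar ends v := fun v => rfl
  have hmu : ∀ v, muS ends (Finset.univ : Finset E) v = vertexMultiplicity ends v :=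
    fun v => rfl
  obtain ⟨π, hπ⟩ := demands_aux hloopless hk (Finset.univ : Finset E).card
    (Finset.univ : Finset E) c rfl
    (by
      intro v
      rw [hinc v]
      exact hc v)
    (by
      intro e _ u w hends
      rw [hmu u, hmu w]
      exact hstable e u w hends)
  refine ⟨π, fun v => ?_⟩
  rw [← hinc v]
  exact hπ v
end

section
/- Let U be a finite set, let F ⊆ 2^U be an intersecting family, and let g : F → Z be an intersecting supermodular function. Let k be a positive integer. If min{|X|, k} ≥ g(X) holds for each X ∈ F, then there exists an assignment of colors π : U → {1,…,k} satisfying |π(X)| ≥ g(X) for each X ∈ F. -/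
open Finset

/-- `F` is an intersecting family: it is closed under unions and intersections of
intersecting pairs. -/
def IntersectingFamily {U : Type*} [DecidableEq U] (F : Finset (Finset U)) : Prop :=
  ∀ X ∈ F, ∀ Y ∈ F, (X ∩ Y).Nonempty → X ∪ Y ∈ F ∧ X ∩ Y ∈ F

/-- `g` is intersecting supermodular on the intersecting family `F`. -/
def IntersectingSupermodular {U : Type*} [DecidableEq U]
    (F : Finset (Finset U)) (g : Finset U → ℤ) : Prop :=
  IntersectingFamily F ∧
    ∀ X ∈ F, ∀ Y ∈ F, (X ∩ Y).Nonempty → g X + g Y ≤ g (X ∪ Y) + g (X ∩ Y)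

section AuxSC

variable {U : Type*} [DecidableEq U]

/-- Key inequality: if `T` is a `k`-tight set intersecting `X`, then `g X ≤ |X ∩ T|`. -/
lemma sc_key_ineq {F : Finset (Finset U)} {g : Finset U → ℤ} {k : ℕ}
    (hg : IntersectingSupermodular F g)
    (hbound : ∀ X ∈ F, g X ≤ min (X.card : ℤ) (k : ℤ))
    {X T : Finset U} (hX : X ∈ F) (hT : T ∈ F) (hgT : g T = (k : ℤ))
    (hne : (X ∩ T).Nonempty) : g X ≤ ((X ∩ T).card : ℤ) := by
  obtain ⟨hXT, hXiT⟩ := hg.1 X hX T hT hne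
  have h1 := hg.2 X hX T hT hne
  have h2 := hbound _ hXT
  have h3 := hbound _ hXiT
  have h4 : g (X ∪ T) ≤ (k : ℤ) := h2.trans (min_le_right _ _)
  have h5 : g (X ∩ T) ≤ ((X ∩ T).card : ℤ) := h3.trans (min_le_left _ _)
  linarith

/-- Existence of a transversal `S` hitting all `k`-tight sets but meeting each `X ∈ F`
in at most `|X| - g X + 1` elements. -/
lemma sc_exists_S {F : Finset (Finset U)} {g : Finset U → ℤ} {k : ℕ} (hk : 0 < k)
    (hg : IntersectingSupermodular F g)
    (hbound : ∀ X ∈ F, g X ≤ min (X.card : ℤ) (k : ℤ)) :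
    ∃ S : Finset U, (∀ X ∈ F, g X = (k : ℤ) → (X ∩ S).Nonempty) ∧
      (∀ X ∈ F, ((X ∩ S).card : ℤ) ≤ (X.card : ℤ) - g X + 1) := by
  classical
  set 𝒯 := F.filter (fun X => g X = (k : ℤ)) with h𝒯
  set M := 𝒯.filter (fun T => ∀ T' ∈ 𝒯, T' ⊆ T → T' = T) with hM
  have h𝒯F : ∀ T ∈ 𝒯, T ∈ F := fun T hT => (mem_filter.1 hT).1
  have h𝒯g : ∀ T ∈ 𝒯, g T = (k : ℤ) := fun T hT => (mem_filter.1 hT).2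
  have hMF : ∀ T ∈ M, T ∈ F := fun T hT => h𝒯F T (mem_filter.1 hT).1
  have hMg : ∀ T ∈ M, g T = (k : ℤ) := fun T hT => h𝒯g T (mem_filter.1 hT).1
  -- every set in M is nonempty
  have hTne : ∀ T ∈ 𝒯, T.Nonempty := by
    intro T hT
    have h1 := (hbound T (h𝒯F T hT)).trans (min_le_left _ _)
    rw [h𝒯g T hT] at h1
    have h2 : (0 : ℤ) < (T.card : ℤ) := lt_of_lt_of_le (by exact_mod_cast hk) h1
    exact card_pos.1 (by exact_mod_cast h2)
  -- selector
  set sel : Finset U → Finset U := fun T => if h : T.Nonempty then {h.choose} else ∅ with hsel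
  have hsel_sub : ∀ T : Finset U, sel T ⊆ T := by
    intro T
    simp only [hsel]
    by_cases h : T.Nonempty
    · rw [dif_pos h]
      intro a ha
      rw [mem_singleton.1 ha]
      exact h.choose_spec
    · rw [dif_neg h]; exact empty_subset _
  have hsel_card : ∀ T : Finset U, (sel T).card ≤ 1 := by
    intro T
    simp only [hsel]
    by_cases h : T.Nonempty
    · rw [dif_pos h]; simp
    · rw [dif_neg h]; simp
  set S := M.biUnion sel with hS
  refine ⟨S, ?_, ?_⟩
  · -- hits every k-tight set
    intro X hX hgX
    have hX𝒯 : X ∈ 𝒯 := mem_filter.2 ⟨hX, hgX⟩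
    obtain ⟨T, hT, hTmin⟩ := exists_min_image (𝒯.filter (· ⊆ X)) card
      ⟨X, mem_filter.2 ⟨hX𝒯, subset_rfl⟩⟩
    have hT𝒯 : T ∈ 𝒯 := (mem_filter.1 hT).1
    have hTX : T ⊆ X := (mem_filter.1 hT).2
    have hTM : T ∈ M := by
      refine mem_filter.2 ⟨hT𝒯, fun T' hT' hsub => ?_⟩
      have : T' ∈ 𝒯.filter (· ⊆ X) := mem_filter.2 ⟨hT', hsub.trans hTX⟩
      exact eq_of_subset_of_card_le hsub (hTmin T' this)
    have hTne' : T.Nonempty := hTne T hT𝒯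
    refine ⟨hTne'.choose, mem_inter.2 ⟨hTX hTne'.choose_spec, ?_⟩⟩
    rw [hS]
    refine mem_biUnion.2 ⟨T, hTM, ?_⟩
    simp only [hsel, dif_pos hTne']
    exact mem_singleton_self _
  · -- the cardinality bound
    intro X hX
    have hgXcard : g X ≤ (X.card : ℤ) := (hbound X hX).trans (min_le_left _ _)
    set I := M.filter (fun T => (X ∩ T).Nonempty) with hI
    -- |X ∩ S| ≤ |I|
    have hsub1 : X ∩ S ⊆ I.biUnion sel := by
      intro a ha
      obtain ⟨haX, haS⟩ := mem_inter.1 ha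
      obtain ⟨T, hTM, haT⟩ := mem_biUnion.1 haS
      have haT' : a ∈ T := hsel_sub T haT
      exact mem_biUnion.2 ⟨T, mem_filter.2 ⟨hTM, ⟨a, mem_inter.2 ⟨haX, haT'⟩⟩⟩, haT⟩
    have hcard1 : (X ∩ S).card ≤ I.card := by
      calc (X ∩ S).card ≤ (I.biUnion sel).card := card_le_card hsub1
        _ ≤ ∑ T ∈ I, (sel T).card := card_biUnion_le
        _ ≤ ∑ T ∈ I, 1 := Finset.sum_le_sum (fun T _ => hsel_card T)
        _ = I.card := by simp
    -- disjointness of minimal tight sets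
    have hdisj : ∀ T ∈ M, ∀ T' ∈ M, T ≠ T' → Disjoint T T' := by
      intro T hT T' hT' hne
      by_contra hcon
      obtain ⟨hTi⟩ := not_disjoint_iff_nonempty_inter.1 hcon
      have hnei : (T ∩ T').Nonempty := not_disjoint_iff_nonempty_inter.1 hcon
      obtain ⟨hUF, hIF⟩ := hg.1 T (hMF T hT) T' (hMF T' hT') hnei
      have h1 := hg.2 T (hMF T hT) T' (hMF T' hT') hnei
      have h2 : g (T ∪ T') ≤ (k : ℤ) := (hbound _ hUF).trans (min_le_right _ _)
      have h3 : g (T ∩ T') ≤ (k : ℤ) := (hbound _ hIF).trans (min_le_right _ _)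
      have h4 : g (T ∩ T') = (k : ℤ) := by
        rw [hMg T hT, hMg T' hT'] at h1; linarith
      have hTi𝒯 : T ∩ T' ∈ 𝒯 := mem_filter.2 ⟨hIF, h4⟩
      have hTmin := (mem_filter.1 hT).2
      have hT'min := (mem_filter.1 hT').2
      have e1 : T ∩ T' = T := hTmin (T ∩ T') hTi𝒯 inter_subset_left
      have e2 : T ∩ T' = T' := hT'min (T ∩ T') hTi𝒯 inter_subset_right
      exact hne (e1 ▸ e2)
    -- pieces disjoint
    have hpieces : ∀ T ∈ I, ∀ T' ∈ I, T ≠ T' → Disjoint (X ∩ T) (X ∩ T') := by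
      intro T hT T' hT' hne
      exact (hdisj T (mem_filter.1 hT).1 T' (mem_filter.1 hT').1 hne).mono
        inter_subset_right inter_subset_right
    have hsum_le : ∑ T ∈ I, (X ∩ T).card ≤ X.card := by
      rw [← card_biUnion hpieces]
      exact card_le_card (biUnion_subset.2 fun T _ => inter_subset_left)
    have hlow : ∀ T ∈ I, g X ≤ ((X ∩ T).card : ℤ) := by
      intro T hT
      have hTM := (mem_filter.1 hT).1
      exact sc_key_ineq hg hbound hX (hMF T hTM) (hMg T hTM) (mem_filter.1 hT).2
    have hone : ∀ T ∈ I, 1 ≤ ((X ∩ T).card : ℤ) := by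
      intro T hT
      have := card_pos.2 (mem_filter.1 hT).2
      exact_mod_cast this
    -- sum bounds in ℤ
    have hsumZ : (∑ T ∈ I, ((X ∩ T).card : ℤ)) ≤ (X.card : ℤ) := by
      exact_mod_cast hsum_le
    have hmul : (I.card : ℤ) * g X ≤ (X.card : ℤ) ∨ True := Or.inr trivial
    have hIg : (I.card : ℤ) * g X ≤ ∑ T ∈ I, ((X ∩ T).card : ℤ) := by
      have := Finset.card_nsmul_le_sum I (fun T => ((X ∩ T).card : ℤ)) (g X) hlow
      simpa [nsmul_eq_mul] using this
    have hI1 : (I.card : ℤ) * 1 ≤ ∑ T ∈ I, ((X ∩ T).card : ℤ) := by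
      have := Finset.card_nsmul_le_sum I (fun T => ((X ∩ T).card : ℤ)) 1 hone
      simpa [nsmul_eq_mul] using this
    have hc1 : ((X ∩ S).card : ℤ) ≤ (I.card : ℤ) := by exact_mod_cast hcard1
    -- conclude
    rcases le_or_gt (g X) 1 with hg1 | hg1
    · have : (I.card : ℤ) ≤ (X.card : ℤ) := by linarith
      linarith
    · rcases Nat.eq_zero_or_pos I.card with h0 | hpos
      · rw [h0] at hc1; push_cast at hc1; linarith
      · have ht1 : (1 : ℤ) ≤ (I.card : ℤ) := by exact_mod_cast hpos
        have hprod : (0 : ℤ) ≤ ((I.card : ℤ) - 1) * (g X - 1) :=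
          mul_nonneg (by linarith) (by linarith)
        nlinarith [hIg, hsumZ]

lemma sc_main_aux {U : Type*} [DecidableEq U] :
    ∀ (k : ℕ), 0 < k → ∀ (F : Finset (Finset U)) (g : Finset U → ℤ),
      IntersectingSupermodular F g →
      (∀ X ∈ F, g X ≤ min (X.card : ℤ) (k : ℤ)) →
      ∃ π : U → Fin k, ∀ X ∈ F, g X ≤ ((X.image π).card : ℤ) := by
  intro k
  induction k with
  | zero => exact fun h => absurd h (lt_irrefl 0)
  | succ k ih =>
    intro _ F g hg hb
    classical
    rcases Nat.eq_zero_or_pos k with hk0 | hkpos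
    · -- base case: one color
      subst hk0
      refine ⟨fun _ => 0, fun X hX => ?_⟩
      rcases X.eq_empty_or_nonempty with rfl | hXne
      · have := (hb ∅ hX).trans (min_le_left _ _)
        simpa using this
      · have h1 : 1 ≤ (X.image (fun _ => (0 : Fin 1))).card :=
          card_pos.2 (hXne.image _)
        have h2 := (hb X hX).trans (min_le_right _ _)
        have h3 : ((X.image (fun _ => (0 : Fin 1))).card : ℤ) ≥ 1 := by exact_mod_cast h1
        push_cast at h2 ⊢
        linarith
    · -- inductive step
      obtain ⟨S, hS1, hS2⟩ := sc_exists_S (k := k + 1) (Nat.succ_pos k) hg hb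
      set f : Finset U → ℤ := fun X => g X - (if (X ∩ S).Nonempty then 1 else 0) with hf
      set F' := F.image (fun X => X \ S) with hF'
      have hfilter : ∀ Y ∈ F', (F.filter (fun X => X \ S = Y)).Nonempty := by
        intro Y hY
        obtain ⟨X, hX, rfl⟩ := mem_image.1 hY
        exact ⟨X, mem_filter.2 ⟨hX, rfl⟩⟩
      set g' : Finset U → ℤ := fun Y =>
        if h : (F.filter (fun X => X \ S = Y)).Nonempty
        then (F.filter (fun X => X \ S = Y)).sup' h f else 0 with hgdef
      have hle : ∀ X ∈ F, f X ≤ g' (X \ S) := by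
        intro X hX
        have hmem : X ∈ F.filter (fun X' => X' \ S = X \ S) := mem_filter.2 ⟨hX, rfl⟩
        have hne : (F.filter (fun X' => X' \ S = X \ S)).Nonempty := ⟨X, hmem⟩
        simp only [hgdef]
        simp only [dif_pos hne]
        exact le_sup' f hmem
      -- sdiff facts
      have hsdiff_union : ∀ X1 X2 : Finset U, (X1 ∪ X2) \ S = (X1 \ S) ∪ (X2 \ S) := by
        intro X1 X2; ext a; simp [mem_sdiff, mem_union]; tauto
      have hsdiff_inter : ∀ X1 X2 : Finset U, (X1 ∩ X2) \ S = (X1 \ S) ∩ (X2 \ S) := by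
        intro X1 X2; ext a; simp [mem_sdiff, mem_inter]; tauto
      -- g' bound
      have hg'le : ∀ Y ∈ F', g' Y ≤ min (Y.card : ℤ) (k : ℤ) := by
        intro Y hY
        have hne := hfilter Y hY
        simp only [hgdef]
        simp only [dif_pos hne]
        refine sup'_le _ _ ?_
        intro X hXf
        obtain ⟨hXF, hXY⟩ := mem_filter.1 hXf
        have hcards : ((X ∩ S).card : ℤ) + ((X \ S).card : ℤ) = (X.card : ℤ) := by
          exact_mod_cast X.card_inter_add_card_sdiff S
        by_cases hXS : (X ∩ S).Nonempty
        · have hfx : f X = g X - 1 := by simp only [hf]; simp [hXS]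
          have hb2 := hS2 X hXF
          have hbk : g X ≤ ((k : ℤ) + 1) := by
            have := (hb X hXF).trans (min_le_right _ _)
            push_cast at this ⊢
            linarith
          rw [hfx]
          refine le_min ?_ (by linarith)
          have : ((X \ S).card : ℤ) = (Y.card : ℤ) := by rw [hXY]
          linarith
        · have hfx : f X = g X := by simp only [hf]; simp [hXS]
          have hXeq : X \ S = X := by
            rw [Finset.sdiff_eq_self_iff_disjoint]
            exact disjoint_iff_inter_eq_empty.2 (not_nonempty_iff_eq_empty.1 hXS)
          have hYX : Y = X := by rw [← hXY, hXeq]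
          have hk1 : g X ≠ ((k : ℤ) + 1) := by
            intro hcon
            apply hXS
            apply hS1 X hXF
            push_cast
            linarith
          have hbk : g X ≤ ((k : ℤ) + 1) := by
            have := (hb X hXF).trans (min_le_right _ _)
            push_cast at this ⊢
            linarith
          have hbk' : g X ≤ (k : ℤ) := by
            rcases lt_or_eq_of_le hbk with h | h
            · linarith
            · exact absurd h hk1
          rw [hfx]
          refine le_min ?_ hbk'
          rw [hYX]
          exact (hb X hXF).trans (min_le_left _ _)
      -- F' intersecting family with g' supermodular
      have hg' : IntersectingSupermodular F' g' := by
        constructor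
        · intro Y1 hY1 Y2 hY2 hne12
          obtain ⟨X1, hX1, rfl⟩ := mem_image.1 hY1
          obtain ⟨X2, hX2, rfl⟩ := mem_image.1 hY2
          have hne' : (X1 ∩ X2).Nonempty := by
            obtain ⟨a, ha⟩ := hne12
            have := mem_inter.1 ha
            exact ⟨a, mem_inter.2 ⟨(mem_sdiff.1 this.1).1, (mem_sdiff.1 this.2).1⟩⟩
          obtain ⟨hU, hI⟩ := hg.1 X1 hX1 X2 hX2 hne'
          exact ⟨mem_image.2 ⟨X1 ∪ X2, hU, hsdiff_union X1 X2⟩,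
                 mem_image.2 ⟨X1 ∩ X2, hI, hsdiff_inter X1 X2⟩⟩
        · intro Y1 hY1 Y2 hY2 hne12
          have hne1 := hfilter Y1 hY1
          have hne2 := hfilter Y2 hY2
          obtain ⟨X1, hX1mem, hsup1⟩ := exists_mem_eq_sup' hne1 f
          obtain ⟨X2, hX2mem, hsup2⟩ := exists_mem_eq_sup' hne2 f
          obtain ⟨hX1F, hX1Y⟩ := mem_filter.1 hX1mem
          obtain ⟨hX2F, hX2Y⟩ := mem_filter.1 hX2mem
          have hne' : (X1 ∩ X2).Nonempty := by
            obtain ⟨a, ha⟩ := hne12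
            have h1 := mem_inter.1 ha
            have hb1 : a ∈ X1 \ S := by rw [hX1Y]; exact h1.1
            have hb2 : a ∈ X2 \ S := by rw [hX2Y]; exact h1.2
            exact ⟨a, mem_inter.2 ⟨(mem_sdiff.1 hb1).1, (mem_sdiff.1 hb2).1⟩⟩
          obtain ⟨hUF, hIF⟩ := hg.1 X1 hX1F X2 hX2F hne'
          have hsm := hg.2 X1 hX1F X2 hX2F hne'
          -- indicator inequality
          have imp1 : ((X1 ∪ X2) ∩ S).Nonempty → (X1 ∩ S).Nonempty ∨ (X2 ∩ S).Nonempty := by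
            rintro ⟨a, ha⟩
            have := mem_inter.1 ha
            rcases mem_union.1 this.1 with h | h
            · exact Or.inl ⟨a, mem_inter.2 ⟨h, this.2⟩⟩
            · exact Or.inr ⟨a, mem_inter.2 ⟨h, this.2⟩⟩
          have imp2 : ((X1 ∩ X2) ∩ S).Nonempty → (X1 ∩ S).Nonempty ∧ (X2 ∩ S).Nonempty := by
            rintro ⟨a, ha⟩
            have := mem_inter.1 ha
            have h2 := mem_inter.1 this.1
            exact ⟨⟨a, mem_inter.2 ⟨h2.1, this.2⟩⟩, ⟨a, mem_inter.2 ⟨h2.2, this.2⟩⟩⟩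
          have hind : (if ((X1 ∪ X2) ∩ S).Nonempty then (1:ℤ) else 0) +
              (if ((X1 ∩ X2) ∩ S).Nonempty then (1:ℤ) else 0) ≤
              (if (X1 ∩ S).Nonempty then (1:ℤ) else 0) +
              (if (X2 ∩ S).Nonempty then (1:ℤ) else 0) := by
            by_cases c1 : (X1 ∩ S).Nonempty <;> by_cases c2 : (X2 ∩ S).Nonempty
            · have e1 : (if ((X1 ∪ X2) ∩ S).Nonempty then (1:ℤ) else 0) ≤ 1 := by
                split_ifs <;> norm_num
              have e2 : (if ((X1 ∩ X2) ∩ S).Nonempty then (1:ℤ) else 0) ≤ 1 := by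
                split_ifs <;> norm_num
              simp only [if_pos c1, if_pos c2]
              linarith
            · have hi : ¬ ((X1 ∩ X2) ∩ S).Nonempty := fun h => c2 (imp2 h).2
              have e1 : (if ((X1 ∪ X2) ∩ S).Nonempty then (1:ℤ) else 0) ≤ 1 := by
                split_ifs <;> norm_num
              simp only [if_pos c1, if_neg c2, if_neg hi]
              linarith
            · have hi : ¬ ((X1 ∩ X2) ∩ S).Nonempty := fun h => c1 (imp2 h).1
              have e1 : (if ((X1 ∪ X2) ∩ S).Nonempty then (1:ℤ) else 0) ≤ 1 := by
                split_ifs <;> norm_num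
              simp only [if_neg c1, if_pos c2, if_neg hi]
              linarith
            · have hi : ¬ ((X1 ∩ X2) ∩ S).Nonempty := fun h => c1 (imp2 h).1
              have hu : ¬ ((X1 ∪ X2) ∩ S).Nonempty := by
                intro h; rcases imp1 h with h' | h' <;> [exact c1 h'; exact c2 h']
              simp only [if_neg c1, if_neg c2, if_neg hi, if_neg hu]
              norm_num
          have hkey : f X1 + f X2 ≤ f (X1 ∪ X2) + f (X1 ∩ X2) := by
            simp only [hf]
            linarith
          have hU' : f (X1 ∪ X2) ≤ g' (Y1 ∪ Y2) := by
            have := hle (X1 ∪ X2) hUF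
            rwa [hsdiff_union, hX1Y, hX2Y] at this
          have hI' : f (X1 ∩ X2) ≤ g' (Y1 ∩ Y2) := by
            have := hle (X1 ∩ X2) hIF
            rwa [hsdiff_inter, hX1Y, hX2Y] at this
          have e1 : g' Y1 = f X1 := by simp only [hgdef, dif_pos hne1]; exact hsup1
          have e2 : g' Y2 = f X2 := by simp only [hgdef, dif_pos hne2]; exact hsup2
          rw [e1, e2]
          linarith
      -- apply IH
      obtain ⟨π', hπ'⟩ := ih hkpos F' g' hg' hg'le
      set π : U → Fin (k + 1) := fun u => if u ∈ S then Fin.last k else Fin.castSucc (π' u)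
        with hπdef
      refine ⟨π, fun X hX => ?_⟩
      have hA : X \ S ∈ F' := mem_image_of_mem _ hX
      have h1 : g' (X \ S) ≤ (((X \ S).image π').card : ℤ) := hπ' _ hA
      have h2 : f X ≤ g' (X \ S) := hle X hX
      have hsub : ((X \ S).image π').image Fin.castSucc ⊆ X.image π := by
        intro b hb
        obtain ⟨c, hc, rfl⟩ := mem_image.1 hb
        obtain ⟨a, ha, rfl⟩ := mem_image.1 hc
        have haX := (mem_sdiff.1 ha).1
        have haS := (mem_sdiff.1 ha).2
        refine mem_image.2 ⟨a, haX, ?_⟩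
        simp only [hπdef]
        simp [haS]
      have hcast_card : (((X \ S).image π').image Fin.castSucc).card
          = ((X \ S).image π').card :=
        card_image_of_injective _ (Fin.castSucc_injective k)
      by_cases hB : (X ∩ S).Nonempty
      · obtain ⟨b, hb⟩ := id hB
        have hbX := (mem_inter.1 hb).1
        have hbS := (mem_inter.1 hb).2
        have hlast : Fin.last k ∈ X.image π := by
          refine mem_image.2 ⟨b, hbX, ?_⟩
          simp only [hπdef]; simp [hbS]
        have hnot : Fin.last k ∉ ((X \ S).image π').image Fin.castSucc := by
          intro hcon
          obtain ⟨c, _, hc⟩ := mem_image.1 hcon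
          exact absurd hc (ne_of_lt (Fin.castSucc_lt_last c))
        have hins : insert (Fin.last k) (((X \ S).image π').image Fin.castSucc)
            ⊆ X.image π := insert_subset hlast hsub
        have hcard : ((X \ S).image π').card + 1 ≤ (X.image π).card := by
          have := card_le_card hins
          rwa [card_insert_of_notMem hnot, hcast_card] at this
        have hfx : f X = g X - 1 := by simp only [hf]; simp [hB]
        have : (((X \ S).image π').card : ℤ) + 1 ≤ ((X.image π).card : ℤ) := by
          exact_mod_cast hcard
        linarith [hfx ▸ h2]
      · have hfx : f X = g X := by simp only [hf]; simp [hB]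
        have hXeq : X \ S = X := by
          rw [Finset.sdiff_eq_self_iff_disjoint]
          exact disjoint_iff_inter_eq_empty.2 (not_nonempty_iff_eq_empty.1 hB)
        have hcard : ((X \ S).image π').card ≤ (X.image π).card := by
          calc ((X \ S).image π').card = (((X \ S).image π').image Fin.castSucc).card :=
                hcast_card.symm
            _ ≤ (X.image π).card := card_le_card hsub
        have : (((X \ S).image π').card : ℤ) ≤ ((X.image π).card : ℤ) := by
          exact_mod_cast hcard
        linarith [hfx ▸ h2]

end AuxSC

/-- **Schrijver's single supermodular coloring theorem.** If `g` is intersecting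
supermodular on `F` and `min{|X|, k} ≥ g(X)` for all `X ∈ F`, then there is a color
assignment `π : U → [k]` with `|π(X)| ≥ g(X)` for all `X ∈ F`. -/
theorem supermodular_coloring_single
    {U : Type*} [Fintype U] [DecidableEq U]
    (F : Finset (Finset U)) (g : Finset U → ℤ)
    (hg : IntersectingSupermodular F g)
    (k : ℕ) (hk : 0 < k)
    (hbound : ∀ X ∈ F, g X ≤ min (X.card : ℤ) (k : ℤ)) :
    ∃ π : U → Fin k, ∀ X ∈ F, g X ≤ ((X.image π).card : ℤ) := by
  exact sc_main_aux k hk F g hg hbound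
end

section
/- Let U be a finite set, F ⊆ 2^U a strongly triple-intersecting family, g : F → Z a strongly triple-intersecting supermodular function, and k a positive integer. Let S, S′ ⊆ U, and let π : S → {1,…,k} and π′ : S′ → {1,…,k} be assignments of colors such that every X ∈ F is π-satisfying and π′-satisfying. Let X₁, X₂, X₃ ∈ F be distinct sets such that X₁ ∩ X₂ ∩ X₃ ≠ ∅, X₁ and X₂ are π-tight, and X₁ and X₃ are π′-tight. Then at least one of the following holds: (i) X₁ ∪ X₂ ∈ F and X₁ ∪ X₂ is π-tight; (ii) X₁ ∪ X₃ ∈ F and X₁ ∪ X₃ is π′-tight. -/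
open Finset

/-- The pair `(X, Y)` is good for the family `F`: both `X ∪ Y` and `X ∩ Y` lie in `F`. -/
def GoodPair {U : Type*} [DecidableEq U] (F : Finset (Finset U)) (X Y : Finset U) : Prop :=
  X ∪ Y ∈ F ∧ X ∩ Y ∈ F

/-- The pair `(X, Y)` is good for `F` and satisfies the supermodular inequality for `g`. -/
def SupGoodPair {U : Type*} [DecidableEq U] (F : Finset (Finset U)) (g : Finset U → ℤ)
    (X Y : Finset U) : Prop :=
  X ∪ Y ∈ F ∧ X ∩ Y ∈ F ∧ g X + g Y ≤ g (X ∪ Y) + g (X ∩ Y)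

/-- `F` is a strongly triple-intersecting family: for all distinct `X₁, X₂, X₃ ∈ F` with
`X₁ ∩ X₂ ∩ X₃ ≠ ∅`, at least two of the three pairs among `X₁, X₂, X₃` are good for `F`. -/
def StronglyTripleIntersectingFamily {U : Type*} [DecidableEq U]
    (F : Finset (Finset U)) : Prop :=
  ∀ X₁ ∈ F, ∀ X₂ ∈ F, ∀ X₃ ∈ F, X₁ ≠ X₂ → X₂ ≠ X₃ → X₁ ≠ X₃ →
    (X₁ ∩ X₂ ∩ X₃).Nonempty →
      (GoodPair F X₁ X₂ ∧ GoodPair F X₂ X₃) ∨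
      (GoodPair F X₂ X₃ ∧ GoodPair F X₃ X₁) ∨
      (GoodPair F X₁ X₂ ∧ GoodPair F X₃ X₁)

/-- `g` is strongly triple-intersecting supermodular on `F`: `F` is a strongly
triple-intersecting family, and for all distinct `X₁, X₂, X₃ ∈ F` with
`X₁ ∩ X₂ ∩ X₃ ≠ ∅`, at least two of the three pairs among `X₁, X₂, X₃` are good for
`F` and satisfy the supermodular inequality for `g`. -/
def StronglyTripleIntersectingSupermodular {U : Type*} [DecidableEq U]
    (F : Finset (Finset U)) (g : Finset U → ℤ) : Prop :=
  StronglyTripleIntersectingFamily F ∧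
  ∀ X₁ ∈ F, ∀ X₂ ∈ F, ∀ X₃ ∈ F, X₁ ≠ X₂ → X₂ ≠ X₃ → X₁ ≠ X₃ →
    (X₁ ∩ X₂ ∩ X₃).Nonempty →
      (SupGoodPair F g X₁ X₂ ∧ SupGoodPair F g X₂ X₃) ∨
      (SupGoodPair F g X₂ X₃ ∧ SupGoodPair F g X₃ X₁) ∨
      (SupGoodPair F g X₁ X₂ ∧ SupGoodPair F g X₃ X₁)

/-- `D_F(X)`: the maximum of `|X ∩ Y|` over `Y ∈ F` with `X ⊄ Y` and `Y ⊄ X`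
(and `0` if no such `Y` exists). -/
def DF {U : Type*} [DecidableEq U] (F : Finset (Finset U)) (X : Finset U) : ℕ :=
  (F.filter (fun Y => ¬ X ⊆ Y ∧ ¬ Y ⊆ X)).sup (fun Y => (X ∩ Y).card)

/-- `L ⊆ F` is a `g`-laminar family: any two members either have one of
`X \ Y`, `Y \ X`, `X ∩ Y` empty, or form a good pair satisfying the supermodular
inequality for `g`. -/
def GLaminar {U : Type*} [DecidableEq U] (F : Finset (Finset U)) (g : Finset U → ℤ)
    (L : Finset (Finset U)) : Prop :=
  ∀ X ∈ L, ∀ Y ∈ L,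
    (X \ Y = ∅ ∨ Y \ X = ∅ ∨ X ∩ Y = ∅) ∨ SupGoodPair F g X Y

/-- `f_π(X) := |X \ S| + |π(X ∩ S)|` for a partial color assignment `π` on `S ⊆ U`
(only the values of `π` on `S` matter). -/
def fPi {U : Type*} [DecidableEq U] {k : ℕ} (S : Finset U) (π : U → Fin k)
    (X : Finset U) : ℕ :=
  (X \ S).card + ((X ∩ S).image π).card

/-- `X` is `π`-satisfying: `f_π(X) ≥ g(X)`. -/
def PiSatisfying {U : Type*} [DecidableEq U] {k : ℕ} (g : Finset U → ℤ)
    (S : Finset U) (π : U → Fin k) (X : Finset U) : Prop :=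
  g X ≤ (fPi S π X : ℤ)

/-- `X` is `π`-tight: `f_π(X) = g(X)`. -/
def PiTight {U : Type*} [DecidableEq U] {k : ℕ} (g : Finset U → ℤ)
    (S : Finset U) (π : U → Fin k) (X : Finset U) : Prop :=
  g X = (fPi S π X : ℤ)

lemma fPi_submodular {U : Type*} [DecidableEq U] {k : ℕ} (S : Finset U) (π : U → Fin k)
    (X Y : Finset U) :
    fPi S π (X ∪ Y) + fPi S π (X ∩ Y) ≤ fPi S π X + fPi S π Y := by
  unfold fPi
  have h1 : ((X ∪ Y) \ S).card + ((X ∩ Y) \ S).card = (X \ S).card + (Y \ S).card := by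
    have e3 : (X ∪ Y) \ S = (X \ S) ∪ (Y \ S) := union_sdiff_distrib ..
    have e4 : (X ∩ Y) \ S = (X \ S) ∩ (Y \ S) := by
      ext a; simp only [mem_sdiff, mem_inter]; tauto
    rw [e3, e4, card_union_add_card_inter]
  have h2 : (((X ∪ Y) ∩ S).image π).card + (((X ∩ Y) ∩ S).image π).card ≤
      ((X ∩ S).image π).card + ((Y ∩ S).image π).card := by
    have e1 : (X ∪ Y) ∩ S = (X ∩ S) ∪ (Y ∩ S) := by ext a; simp only [mem_union, mem_inter]; tauto
    have e2 : (X ∩ Y) ∩ S = (X ∩ S) ∩ (Y ∩ S) := by ext a; simp only [mem_inter]; tauto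
    rw [e1, e2, image_union]
    calc ((X ∩ S).image π ∪ (Y ∩ S).image π).card + (((X ∩ S) ∩ (Y ∩ S)).image π).card
        ≤ ((X ∩ S).image π ∪ (Y ∩ S).image π).card +
          ((X ∩ S).image π ∩ (Y ∩ S).image π).card := by
          gcongr
          exact image_inter_subset _ _ _
      _ = _ := card_union_add_card_inter _ _
  omega

lemma tight_of_supgood {U : Type*} [DecidableEq U] {k : ℕ}
    (F : Finset (Finset U)) (g : Finset U → ℤ) (S : Finset U) (π : U → Fin k)
    (hsat : ∀ X ∈ F, PiSatisfying g S π X)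
    {X Y : Finset U} (hXY : SupGoodPair F g X Y)
    (hX : PiTight g S π X) (hY : PiTight g S π Y) :
    PiTight g S π (X ∪ Y) := by
  obtain ⟨hu, hi, hsup⟩ := hXY
  have h1 := hsat _ hu
  have h2 := hsat _ hi
  have h3 := fPi_submodular S π X Y
  unfold PiSatisfying at h1 h2
  unfold PiTight at *
  omega

/-- Claim 2 of the paper. Suppose every `X ∈ F` is `π`-satisfying and `π′`-satisfying,
and `X₁, X₂, X₃ ∈ F` are distinct with `X₁ ∩ X₂ ∩ X₃ ≠ ∅`, `X₁, X₂` `π`-tight, and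
`X₁, X₃` `π′`-tight. Then `X₁ ∪ X₂ ∈ F` and is `π`-tight, or `X₁ ∪ X₃ ∈ F` and is
`π′`-tight. -/
theorem tight_union
    {U : Type*} [Fintype U] [DecidableEq U]
    (F : Finset (Finset U)) (g : Finset U → ℤ)
    (hg : StronglyTripleIntersectingSupermodular F g)
    (k : ℕ) (hk : 0 < k)
    (S S' : Finset U) (π π' : U → Fin k)
    (hsat : ∀ X ∈ F, PiSatisfying g S π X)
    (hsat' : ∀ X ∈ F, PiSatisfying g S' π' X)
    (X₁ X₂ X₃ : Finset U) (hX₁ : X₁ ∈ F) (hX₂ : X₂ ∈ F) (hX₃ : X₃ ∈ F)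
    (h12 : X₁ ≠ X₂) (h23 : X₂ ≠ X₃) (h13 : X₁ ≠ X₃)
    (hmeet : (X₁ ∩ X₂ ∩ X₃).Nonempty)
    (ht2 : PiTight g S π X₁ ∧ PiTight g S π X₂)
    (ht3 : PiTight g S' π' X₁ ∧ PiTight g S' π' X₃) :
    (X₁ ∪ X₂ ∈ F ∧ PiTight g S π (X₁ ∪ X₂)) ∨
    (X₁ ∪ X₃ ∈ F ∧ PiTight g S' π' (X₁ ∪ X₃)) := by
  rcases hg.2 X₁ hX₁ X₂ hX₂ X₃ hX₃ h12 h23 h13 hmeet with ⟨h, _⟩ | ⟨_, h⟩ | ⟨h, _⟩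
  · exact Or.inl ⟨h.1, tight_of_supgood F g S π hsat h ht2.1 ht2.2⟩
  · obtain ⟨hu, hi, hs⟩ := h
    have : SupGoodPair F g X₁ X₃ :=
      ⟨by rwa [union_comm], by rwa [inter_comm],
       by rw [union_comm X₁, inter_comm X₁]; linarith⟩
    exact Or.inr ⟨this.1, tight_of_supgood F g S' π' hsat' this ht3.1 ht3.2⟩
  · exact Or.inl ⟨h.1, tight_of_supgood F g S π hsat h ht2.1 ht2.2⟩
end

section
/- Let U be a finite set, F ⊆ 2^U a strongly triple-intersecting family, g : F → Z a strongly triple-intersecting supermodular function, k a positive integer with min{|X|, k} ≥ g(X) for every X ∈ F, and suppose L := {X ∈ F : g(X) + D_F(X) > k} is a g-laminar family. Let T₀ ⊆ U and π₀ : T₀ → {1,…,k} be such that every X ∈ F is π₀-satisfying, let u₀ ∈ U \ T₀, and let F₀ be the family of all π₀-tight sets X ∈ F with u₀ ∈ X. Then the number of maximal sets (with respect to inclusion) in F₀ is at most 2. -/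
open Finset

/-- In the setting of the proof of the main theorem: if every `X ∈ F` is
`π₀`-satisfying and `u₀ ∈ U \ T₀`, then the family `F₀` of all `π₀`-tight sets of `F`
containing `u₀` has at most two maximal sets (with respect to inclusion). -/
theorem at_most_two_maximal_tight_sets
    {U : Type*} [Fintype U] [DecidableEq U]
    (F : Finset (Finset U)) (g : Finset U → ℤ)
    (hg : StronglyTripleIntersectingSupermodular F g)
    (k : ℕ) (hk : 0 < k)
    (hbound : ∀ X ∈ F, g X ≤ min (X.card : ℤ) (k : ℤ))
    (hlaminar : GLaminar F g (F.filter (fun X => (k : ℤ) < g X + (DF F X : ℤ))))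
    (T₀ : Finset U) (π₀ : U → Fin k)
    (hsat : ∀ X ∈ F, PiSatisfying g T₀ π₀ X)
    (u₀ : U) (hu₀ : u₀ ∉ T₀) :
    ((F.filter (fun X => u₀ ∈ X ∧ g X = (fPi T₀ π₀ X : ℤ))).filter
        (fun M => ∀ X ∈ F.filter (fun X => u₀ ∈ X ∧ g X = (fPi T₀ π₀ X : ℤ)),
          M ⊆ X → X = M)).card ≤ 2 := by
  by_contra hcard
  push_neg at hcard
  set F0 := F.filter (fun X => u₀ ∈ X ∧ g X = (fPi T₀ π₀ X : ℤ)) with hF0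
  set M := F0.filter (fun M => ∀ X ∈ F0, M ⊆ X → X = M) with hM
  obtain ⟨X₁, X₂, X₃, h₁, h₂, h₃, h12, h13, h23⟩ := Finset.two_lt_card_iff.mp hcard
  -- basic facts
  have hmem : ∀ X ∈ M, X ∈ F ∧ u₀ ∈ X ∧ g X = (fPi T₀ π₀ X : ℤ) := by
    intro X hX
    have := Finset.mem_filter.mp hX
    have := Finset.mem_filter.mp this.1
    exact ⟨this.1, this.2⟩
  have hmax : ∀ X ∈ M, ∀ Y ∈ F0, X ⊆ Y → Y = X := fun X hX => (Finset.mem_filter.mp hX).2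
  -- key: no sup-good pair among two distinct maximal sets
  have key : ∀ X ∈ M, ∀ Y ∈ M, X ≠ Y → ¬ SupGoodPair F g X Y := by
    intro X hX Y hY hXY ⟨hU, hI, hsup⟩
    obtain ⟨hXF, hXu, hXt⟩ := hmem X hX
    obtain ⟨hYF, hYu, hYt⟩ := hmem Y hY
    have hsubf := fPi_submodular T₀ π₀ X Y
    have hsatU := hsat _ hU
    have hsatI := hsat _ hI
    unfold PiSatisfying at hsatU hsatI
    -- derive X ∪ Y tight
    have htU : g (X ∪ Y) = (fPi T₀ π₀ (X ∪ Y) : ℤ) := by omega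
    have hUinF0 : X ∪ Y ∈ F0 := by
      rw [hF0, Finset.mem_filter]
      exact ⟨hU, Finset.mem_union_left _ hXu, htU⟩
    have e1 : X ∪ Y = X := hmax X hX _ hUinF0 Finset.subset_union_left
    have e2 : X ∪ Y = Y := hmax Y hY _ hUinF0 Finset.subset_union_right
    exact hXY (e1 ▸ e2)
  have hne : (X₁ ∩ X₂ ∩ X₃).Nonempty := by
    refine ⟨u₀, ?_⟩
    simp only [Finset.mem_inter]
    exact ⟨⟨(hmem _ h₁).2.1, (hmem _ h₂).2.1⟩, (hmem _ h₃).2.1⟩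
  have hF₁ := (hmem _ h₁).1
  have hF₂ := (hmem _ h₂).1
  have hF₃ := (hmem _ h₃).1
  rcases hg.2 X₁ hF₁ X₂ hF₂ X₃ hF₃ h12 h23 h13 hne with ⟨h, _⟩ | ⟨h, _⟩ | ⟨h, _⟩
  · exact key X₁ h₁ X₂ h₂ h12 h
  · exact key X₂ h₂ X₃ h₃ h23 h
  · exact key X₁ h₁ X₂ h₂ h12 h
end
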